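/- arXiv:1908.09857 — 9 statements merged into one kernel-verified Lean document; each statement's English description precedes it below -/
import Mathlib

section
/- Suppose Q is a probability measure on G_T such that (e^{-rt}S(t))_{t∈[0,T]} is an (F_t)_{t∈[0,T]}-martingale under Q, and such that for each s ∈ [0,T] there exists an F_s-measurable random variable G(s) which is a version of Q(s < τ | F_T), i.e. E_Q[1_A·G(s)] = Q(A ∩ {s < τ}) for every A ∈ F_T. Then the discounted stock price process (e^{-rt}S(t))_{t∈[0,T]} is a (G_t)_{t∈[0,T]}-martingale under Q; in fact e^{-rt}S(t) = E_Q[e^{-rT}S(T) | G_t] Q-a.s. for every t ∈ [0,T]. -/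
open MeasureTheory ProbabilityTheory

/-- The natural filtration of a real-valued process `W`. -/
def natFilt {Ω : Type*} (W : ℝ → Ω → ℝ) (t : ℝ) : MeasurableSpace Ω :=
  ⨆ u ∈ Set.Icc (0 : ℝ) t, MeasurableSpace.comap (W u) inferInstance

/-- The σ-algebra generated by the `P`-null sets. -/
def sigmaNull {Ω : Type*} [MeasurableSpace Ω] (P : Measure Ω) : MeasurableSpace Ω :=
  MeasurableSpace.generateFrom {A | MeasurableSet A ∧ P A = 0}

/-- `W` is a standard Brownian motion under `P`. -/
def IsStdBM {Ω : Type*} [MeasurableSpace Ω] (P : Measure Ω) (W : ℝ → Ω → ℝ) : Prop :=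
  (∀ t : ℝ, Measurable (W t)) ∧
  (∀ ω, W 0 ω = 0) ∧
  (∀ ω, Continuous fun t => W t ω) ∧
  (∀ s t : ℝ, 0 ≤ s → s ≤ t →
    Measure.map (fun ω => W t ω - W s ω) P = gaussianReal 0 (t - s).toNNReal) ∧
  (∀ s t : ℝ, 0 ≤ s → s ≤ t →
    Indep (MeasurableSpace.comap (fun ω => W t ω - W s ω) inferInstance) (natFilt W s) P)

/-- `X` is an `(F_t)_{t∈[0,T]}`-martingale under `Q`. -/
def MartingaleOn {Ω : Type*} [mΩ : MeasurableSpace Ω] (F : ℝ → MeasurableSpace Ω)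
    (Q : Measure Ω) (X : ℝ → Ω → ℝ) (T : ℝ) : Prop :=
  (∀ t ∈ Set.Icc (0 : ℝ) T, Measurable[F t] (X t) ∧ Integrable (X t) Q) ∧
  ∀ s t : ℝ, 0 ≤ s → s ≤ t → t ≤ T → Q[X t | F s] =ᵐ[Q] X s

/-
Let `X := e^{-rT} S(T)`, an `F_T`-measurable variable. By the `F`-martingale property,
`e^{-rt} S(t) = E_Q[X | F_t]`, so it suffices that `E_Q[X | F_t]` is also a version of
`E_Q[X | G_t]`. The σ-algebra `G_t` is generated by the π-system of sets `B ∩ {τ ≤ u}` with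
`B ∈ F_t`, `u ≤ t`, so it is enough to compare integrals over `B` and over `B ∩ {u < τ}`.
Since `G(u)` is a version of `Q(u < τ | F_T)`, for every integrable `F_T`-measurable `Y`
  `∫_{B ∩ {u < τ}} Y dQ = ∫ 1_B G(u) Y dQ`,
and `1_B G(u)` is bounded and `F_t`-measurable (as `F_u ≤ F_t`), so the right-hand side does
not change when `X` is replaced by `E_Q[X | F_t]`.
-/

open Set MeasurableSpace

lemma isPiSystem_image2_inter {α : Type*} {S T : Set (Set α)} (hS : IsPiSystem S)
    (hT : IsPiSystem T) : IsPiSystem (image2 (· ∩ ·) S T) := by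
  rintro _ ⟨a, ha, b, hb, rfl⟩ _ ⟨c, hc, d, hd, rfl⟩ hne
  rw [inter_inter_inter_comm] at hne ⊢
  exact ⟨a ∩ c, hS a ha c hc hne.left, b ∩ d, hT b hb d hd hne.right, rfl⟩

lemma generateFrom_image2_inter_insert_univ {α : Type*} (m : MeasurableSpace α)
    (S : Set (Set α)) :
    generateFrom (image2 (· ∩ ·) {B | MeasurableSet[m] B} (insert univ S)) =
      m ⊔ generateFrom S := by
  apply le_antisymm
  · refine generateFrom_le ?_
    rintro _ ⟨B, hB, E, rfl | hE, rfl⟩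
    · simpa using (le_sup_left : m ≤ m ⊔ generateFrom S) _ hB
    · exact ((le_sup_left : m ≤ _) _ hB).inter
        ((le_sup_right : generateFrom S ≤ _) _ (measurableSet_generateFrom hE))
  · refine sup_le (fun B hB => ?_) (generateFrom_le fun E hE => ?_)
    · exact measurableSet_generateFrom ⟨B, hB, univ, mem_insert _ _, inter_univ B⟩
    · exact measurableSet_generateFrom ⟨univ, .univ, E, mem_insert_of_mem _ hE, univ_inter E⟩

section

variable {Ω E : Type*} {m m₀ : MeasurableSpace Ω} {μ : Measure Ω}
  [NormedAddCommGroup E] [NormedSpace ℝ E]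

lemma setIntegral_eq_of_isPiSystem (hm : m ≤ m₀) {D : Set (Set Ω)} (h_eq : m = generateFrom D)
    (hD : IsPiSystem D) {f g : Ω → E} (hf : Integrable f μ) (hg : Integrable g μ)
    (h_univ : ∫ x, f x ∂μ = ∫ x, g x ∂μ)
    (basic : ∀ s ∈ D, ∫ x in s, f x ∂μ = ∫ x in s, g x ∂μ) :
    ∀ s, MeasurableSet[m] s → ∫ x in s, f x ∂μ = ∫ x in s, g x ∂μ := by
  intro s hs
  induction s, hs using MeasurableSpace.induction_on_inter h_eq hD with
  | empty => simp
  | basic s hs => exact basic s hs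
  | compl s hs ih =>
    rw [setIntegral_compl (hm s hs) hf, setIntegral_compl (hm s hs) hg, ih, h_univ]
  | iUnion s hd hs ih =>
    rw [integral_iUnion (fun i => hm _ (hs i)) hd hf.integrableOn,
      integral_iUnion (fun i => hm _ (hs i)) hd hg.integrableOn]
    exact tsum_congr ih

end

section

variable {Ω : Type*} {m m₀ : MeasurableSpace Ω} {μ : Measure Ω} [IsFiniteMeasure μ]

lemma ae_mem_Icc_of_forall_setIntegral_mem (hm : m ≤ m₀) {f : Ω → ℝ}
    (hf : StronglyMeasurable[m] f)
    (h : ∀ s, MeasurableSet[m] s → 0 ≤ ∫ x in s, f x ∂μ ∧ ∫ x in s, f x ∂μ ≤ μ.real s) :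
    ∀ᵐ x ∂μ, f x ∈ Icc 0 1 := by
  -- `f` is not yet known to be integrable, but its truncations to `{|f| ≤ n}` are.
  have h_trunc : ∀ n : ℕ, ∀ᵐ x ∂μ, {y | |f y| ≤ n}.indicator f x ∈ Icc 0 1 := by
    intro n
    have hE : MeasurableSet[m] {y | |f y| ≤ n} :=
      (continuous_abs.measurable.comp hf.measurable) measurableSet_Iic
    have hg : StronglyMeasurable[m] ({y | |f y| ≤ n}.indicator f) := hf.indicator hE
    have hg_int : Integrable ({y | |f y| ≤ n}.indicator f) (μ.trim hm) := by
      refine .of_bound hg.aestronglyMeasurable n (ae_of_all _ fun x => ?_)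
      by_cases hx : |f x| ≤ n <;> simp [hx]
    have h_trim : ∀ s, MeasurableSet[m] s →
        ∫ x in s, {y | |f y| ≤ n}.indicator f x ∂μ.trim hm = ∫ x in s ∩ {y | |f y| ≤ n}, f x ∂μ :=
      fun s hs => by
      rw [← setIntegral_trim hm hg hs, setIntegral_indicator (hm _ hE)]
    have h_nonneg := ae_nonneg_of_forall_setIntegral_nonneg (m0 := m) hg_int fun s hs _ => by
      rw [h_trim s hs]; exact (h _ (hs.inter hE)).1
    have h_le_one := ae_le_of_forall_setIntegral_le (m0 := m) hg_int (integrable_const 1)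
        fun s hs _ => by
      rw [h_trim s hs, setIntegral_const, smul_eq_mul, mul_one, measureReal_def,
        trim_measurableSet_eq hm hs]
      exact (h _ (hs.inter hE)).2.trans (measureReal_mono inter_subset_left)
    exact ae_of_ae_trim hm (h_nonneg.mp (h_le_one.mono fun x h1 h0 => ⟨h0, h1⟩))
  filter_upwards [ae_all_iff.2 h_trunc] with x hx
  obtain ⟨n, hn⟩ := exists_nat_ge |f x|
  simpa [indicator_of_mem (show x ∈ {y | |f y| ≤ n} from hn)] using hx n

end

section

variable {Ω : Type*} {m m' m₀ : MeasurableSpace Ω} {μ : Measure Ω} [IsFiniteMeasure μ]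

lemma ae_eq_condExp_indicator_of_forall_setIntegral_eq (hm : m ≤ m₀) {s : Set Ω}
    (hs : MeasurableSet s) {g : Ω → ℝ} (hg : StronglyMeasurable[m] g)
    (h : ∀ A, MeasurableSet[m] A → ∫ x in A, g x ∂μ = μ.real (A ∩ s)) :
    g =ᵐ[μ] μ⟦s | m⟧ := by
  have hg_mem := ae_mem_Icc_of_forall_setIntegral_mem hm hg fun A hA => by
    rw [h A hA]; exact ⟨measureReal_nonneg, measureReal_mono inter_subset_left⟩
  have hg_int : Integrable g μ := .of_bound (hg.mono hm).aestronglyMeasurable 1 <|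
    hg_mem.mono fun x hx => by
      rw [Real.norm_eq_abs, abs_le]; constructor <;> linarith [hx.1, hx.2]
  refine ae_eq_condExp_of_forall_setIntegral_eq hm ((integrable_const 1).indicator hs)
    (fun _ _ _ => hg_int.integrableOn) (fun A hA _ => ?_) hg.aestronglyMeasurable
  rw [h A hA, setIntegral_indicator hs, setIntegral_const, smul_eq_mul, mul_one]

lemma condExp_indicator_mem_Icc (hm : m ≤ m₀) {s : Set Ω} (hs : MeasurableSet s) :
    ∀ᵐ x ∂μ, (μ⟦s | m⟧) x ∈ Icc 0 1 := by
  have h_nonneg : 0 ≤ᵐ[μ] μ⟦s | m⟧ :=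
    condExp_nonneg (ae_of_all _ fun x => indicator_nonneg (fun _ _ => zero_le_one' ℝ) x)
  have h_le : μ⟦s | m⟧ ≤ᵐ[μ] μ[(fun _ => (1 : ℝ)) | m] :=
    condExp_mono ((integrable_const 1).indicator hs) (integrable_const 1)
      (ae_of_all _ fun x => indicator_le_self' (fun _ _ => zero_le_one' ℝ) x)
  rw [condExp_const hm] at h_le
  filter_upwards [h_nonneg, h_le] with x h0 h1 using ⟨h0, h1⟩

lemma condExp_indicator_compl (hm : m ≤ m₀) {s : Set Ω} (hs : MeasurableSet s) :
    μ⟦sᶜ | m⟧ =ᵐ[μ] 1 - μ⟦s | m⟧ := by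
  rw [indicator_compl]
  filter_upwards [condExp_sub (integrable_const (1 : ℝ)) ((integrable_const 1).indicator hs) m]
    with x hx
  simpa [condExp_const hm] using hx

lemma aestronglyMeasurable_condExp_indicator_compl (hm : m ≤ m') (hm' : m' ≤ m₀) {s : Set Ω}
    (hs : MeasurableSet s) {g : Ω → ℝ} (hg : StronglyMeasurable[m] g)
    (h : ∀ A, MeasurableSet[m'] A → ∫ x in A, g x ∂μ = μ.real (A ∩ s)) :
    AEStronglyMeasurable[m] (μ⟦sᶜ | m'⟧) μ := by
  have hg_cond := ae_eq_condExp_indicator_of_forall_setIntegral_eq hm' hs (hg.mono hm) h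
  refine ⟨1 - g, stronglyMeasurable_const.sub hg, ?_⟩
  filter_upwards [condExp_indicator_compl hm' hs, hg_cond] with x h_compl h_eq
  simp [h_compl, h_eq]

lemma setIntegral_eq_integral_condExp_indicator_mul (hm : m ≤ m₀) {s : Set Ω}
    (hs : MeasurableSet s) {Y : Ω → ℝ} (hY : StronglyMeasurable[m] Y) (hYi : Integrable Y μ) :
    ∫ x in s, Y x ∂μ = ∫ x, (μ⟦s | m⟧) x * Y x ∂μ := by
  have h_ind : s.indicator (fun _ => (1 : ℝ)) * Y = s.indicator Y := by
    ext x; by_cases hx : x ∈ s <;> simp [hx]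
  calc ∫ x in s, Y x ∂μ = ∫ x, (s.indicator (fun _ => (1 : ℝ)) * Y) x ∂μ := by
        rw [h_ind, integral_indicator hs]
    _ = ∫ x, μ[s.indicator (fun _ => (1 : ℝ)) * Y | m] x ∂μ := (integral_condExp hm).symm
    _ = ∫ x, (μ⟦s | m⟧) x * Y x ∂μ := integral_congr_ae <|
        condExp_mul_of_stronglyMeasurable_right hY (h_ind ▸ hYi.indicator hs)
          ((integrable_const 1).indicator hs)

lemma setIntegral_inter_condExp (hm : m ≤ m') (hm' : m' ≤ m₀) {E : Set Ω}
    (hE : MeasurableSet E) (hE_cond : AEStronglyMeasurable[m] (μ⟦E | m'⟧) μ) {X : Ω → ℝ}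
    (hX : StronglyMeasurable[m'] X) (hXi : Integrable X μ) {B : Set Ω}
    (hB : MeasurableSet[m] B) :
    ∫ x in B ∩ E, μ[X | m] x ∂μ = ∫ x in B ∩ E, X x ∂μ := by
  set k := B.indicator (μ⟦E | m'⟧)
  have hk : AEStronglyMeasurable[m] k μ := by
    obtain ⟨g, hg, hfg⟩ := hE_cond
    exact ⟨B.indicator g, hg.indicator hB,
      hfg.mono fun x hx => by by_cases hxB : x ∈ B <;> simp [k, hxB, hx]⟩
  have hk_le : ∀ᵐ x ∂μ, ‖k x‖ ≤ 1 := (condExp_indicator_mem_Icc hm' hE).mono fun x hx => by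
    by_cases hxB : x ∈ B
    · simpa [k, hxB, abs_le] using ⟨by linarith [hx.1], hx.2⟩
    · simp [k, hxB]
  have h_factor : ∀ Y, StronglyMeasurable[m'] Y → Integrable Y μ →
      ∫ x in B ∩ E, Y x ∂μ = ∫ x, k x * Y x ∂μ := by
    intro Y hY hYi
    rw [inter_comm, ← setIntegral_indicator ((hm.trans hm') _ hB),
      setIntegral_eq_integral_condExp_indicator_mul hm' hE (hY.indicator (hm _ hB))
        (hYi.indicator ((hm.trans hm') _ hB))]
    congr 1; ext x; by_cases hxB : x ∈ B <;> simp [k, hxB]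
  rw [h_factor _ (stronglyMeasurable_condExp.mono hm) integrable_condExp,
    h_factor X hX hXi]
  exact (integral_congr_ae (condExp_stronglyMeasurable_mul_of_bound₀ (hm.trans hm') hk hXi 1
    hk_le)).symm.trans (integral_condExp (hm.trans hm'))

theorem condExp_ae_eq_condExp_sup_generateFrom (hm : m ≤ m') (hm' : m' ≤ m₀)
    {S : Set (Set Ω)} (hS : IsPiSystem S) (hS_meas : ∀ E ∈ S, MeasurableSet E)
    (hS_cond : ∀ E ∈ S, AEStronglyMeasurable[m] (μ⟦E | m'⟧) μ)
    {X : Ω → ℝ} (hX : StronglyMeasurable[m'] X) (hXi : Integrable X μ) :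
    μ[X | m] =ᵐ[μ] μ[X | m ⊔ generateFrom S] := by
  have hmS : m ⊔ generateFrom S ≤ m₀ := sup_le (hm.trans hm') (generateFrom_le hS_meas)
  refine ae_eq_condExp_of_forall_setIntegral_eq hmS hXi
    (fun _ _ _ => integrable_condExp.integrableOn) (fun s hs _ => ?_)
    ((stronglyMeasurable_condExp (m := m) (μ := μ) (f := X)).mono
      (le_sup_left : m ≤ m ⊔ generateFrom S)).aestronglyMeasurable
  refine setIntegral_eq_of_isPiSystem hmS (generateFrom_image2_inter_insert_univ m S).symm
    (isPiSystem_image2_inter (@isPiSystem_measurableSet _ m) hS.insert_univ)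
    integrable_condExp hXi (integral_condExp (hm.trans hm')) ?_ s hs
  rintro _ ⟨B, hB, E, rfl | hE, rfl⟩ <;> dsimp only
  · rw [inter_univ]; exact setIntegral_condExp (hm.trans hm') hXi hB
  · exact setIntegral_inter_condExp hm hm' (hS_meas E hE) (hS_cond E hE) hX hXi hB

end

lemma natFilt_mono {Ω : Type*} (W : ℝ → Ω → ℝ) : Monotone (natFilt W) :=
  fun _ _ hab => biSup_mono fun _ hu => ⟨hu.1, hu.2.trans hab⟩

lemma isPiSystem_setOf_le {Ω α : Type*} [LinearOrder α] (τ : Ω → α) (a b : α) :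
    IsPiSystem {A : Set Ω | ∃ u, a ≤ u ∧ u ≤ b ∧ A = {ω | τ ω ≤ u}} := by
  rintro _ ⟨u, hau, hub, rfl⟩ _ ⟨v, hav, -, rfl⟩ -
  exact ⟨min u v, le_min hau hav, (min_le_left u v).trans hub, by ext; simp⟩

theorem stmt4_general {Ω : Type*} [mΩ : MeasurableSpace Ω] (P : Measure Ω)
    (W : ℝ → Ω → ℝ) (T r : ℝ) (S : ℝ → Ω → ℝ)
    (F : ℝ → MeasurableSpace Ω) (hF : ∀ t : ℝ, F t = natFilt W t ⊔ sigmaNull P)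
    (τ : Ω → ℝ) (GG : ℝ → MeasurableSpace Ω)
    (hGG : ∀ t, GG t = F t ⊔ MeasurableSpace.generateFrom
      {A | ∃ u : ℝ, 0 ≤ u ∧ u ≤ t ∧ A = {ω | τ ω ≤ u}})
    (Q : @Measure Ω (GG T)) (hQ : @IsProbabilityMeasure Ω (GG T) Q)
    (hSmart : MartingaleOn (mΩ := GG T) F Q
      (fun t ω => Real.exp (-(r * t)) * S t ω) T)
    (hG_version : ∀ s ∈ Set.Icc (0 : ℝ) T, ∃ Gs : Ω → ℝ, Measurable[F s] Gs ∧
      ∀ A : Set Ω, MeasurableSet[F T] A →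
        ∫ ω in A, Gs ω ∂Q = (Q (A ∩ {ω | s < τ ω})).toReal) :
    ∀ t ∈ Set.Icc (0 : ℝ) T,
      (fun ω => Real.exp (-(r * t)) * S t ω) =ᵐ[Q]
        Q[fun ω => Real.exp (-(r * T)) * S T ω | GG t] := by
  rintro t ⟨ht0, htT⟩
  have hF_mono : Monotone F := fun a b hab => by
    rw [hF a, hF b]; exact sup_le_sup_right (natFilt_mono W hab) _
  have hFT : F T ≤ GG T := by rw [hGG T]; exact le_sup_left
  have hτ_le : ∀ u ∈ Icc 0 T, MeasurableSet[GG T] {ω | τ ω ≤ u} := fun u hu => by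
    rw [hGG T]
    exact le_sup_right (a := F T) _ (measurableSet_generateFrom ⟨u, hu.1, hu.2, rfl⟩)
  obtain ⟨hX, hXi⟩ := hSmart.1 T ⟨ht0.trans htT, le_rfl⟩
  refine (hSmart.2 t T ht0 htT le_rfl).symm.trans ?_
  rw [hGG t]
  refine condExp_ae_eq_condExp_sup_generateFrom (hF_mono htT) hFT (isPiSystem_setOf_le τ 0 t)
    ?_ ?_ hX.stronglyMeasurable hXi
  · rintro _ ⟨u, hu0, hut, rfl⟩
    exact hτ_le u ⟨hu0, hut.trans htT⟩
  · rintro _ ⟨u, hu0, hut, rfl⟩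
    obtain ⟨G, hG, hG_int⟩ := hG_version u ⟨hu0, hut.trans htT⟩
    have h_compl : {ω | u < τ ω}ᶜ = {ω | τ ω ≤ u} := by ext; simp
    rw [← h_compl]
    exact aestronglyMeasurable_condExp_indicator_compl (hF_mono htT) hFT
      (by simpa only [← h_compl, MeasurableSet.compl_iff] using hτ_le u ⟨hu0, hut.trans htT⟩)
      (hG.mono (hF_mono hut) le_rfl).stronglyMeasurable hG_int

/-- In the Black–Scholes setting with default time `τ` and enlarged
filtration `G_t = σ(F_t ∪ I_t)`, suppose `Q` is a probability measure on `G_T` such that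
`(e^{-rt}S(t))_{t∈[0,T]}` is an `(F_t)`-martingale under `Q`, and such that for each
`s ∈ [0,T]` there exists an `F_s`-measurable random variable `G(s)` which is a version of
`Q(s < τ | F_T)`. Then the discounted stock price process is a `(G_t)_{t∈[0,T]}`-martingale
under `Q`; in fact `e^{-rt}S(t) = E_Q[e^{-rT}S(T) | G_t]` `Q`-a.s. for every `t ∈ [0,T]`. -/
theorem stmt4 {Ω : Type*} [mΩ : MeasurableSpace Ω] (P : Measure Ω)
    [IsProbabilityMeasure P] (W : ℝ → Ω → ℝ) (hW : IsStdBM P W)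
    (T r σ' μ' S0 : ℝ) (hT : 0 < T) (hr : 0 ≤ r) (hσ : 0 < σ') (hS0 : 0 < S0)
    (S : ℝ → Ω → ℝ)
    (hS : ∀ t ω, S t ω = S0 * Real.exp (σ' * W t ω + (μ' - σ' ^ 2 / 2) * t))
    (F : ℝ → MeasurableSpace Ω) (hF : ∀ t : ℝ, F t = natFilt W t ⊔ sigmaNull P)
    (τ : Ω → ℝ) (hτ_pos : ∀ ω, 0 < τ ω) (hτ_meas : Measurable τ)
    (GG : ℝ → MeasurableSpace Ω)
    (hGG : ∀ t, GG t = F t ⊔ MeasurableSpace.generateFrom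
      {A | ∃ u : ℝ, 0 ≤ u ∧ u ≤ t ∧ A = {ω | τ ω ≤ u}})
    (Q : @Measure Ω (GG T)) (hQ : @IsProbabilityMeasure Ω (GG T) Q)
    (hSmart : MartingaleOn (mΩ := GG T) F Q
      (fun t ω => Real.exp (-(r * t)) * S t ω) T)
    (hG_version : ∀ s ∈ Set.Icc (0 : ℝ) T, ∃ Gs : Ω → ℝ, Measurable[F s] Gs ∧
      ∀ A : Set Ω, MeasurableSet[F T] A →
        ∫ ω in A, Gs ω ∂Q = (Q (A ∩ {ω | s < τ ω})).toReal) :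
    ∀ t ∈ Set.Icc (0 : ℝ) T,
      (fun ω => Real.exp (-(r * t)) * S t ω) =ᵐ[Q]
        Q[fun ω => Real.exp (-(r * T)) * S T ω | GG t] :=
  stmt4_general (mΩ := mΩ) P W T r S F hF τ GG hGG Q hQ hSmart hG_version
end

section
/- Suppose that for each t ∈ [0,T] one has e^{-rt}c(t)G(t) = E_Q[e^{-rT}G(T) | F_t] Q-a.s. Then the discounted defaultable bond price process is a (G_t)_{t∈[0,T]}-martingale under Q: writing D(t) := c(t)·1_{{t<τ}} (so that D(T) = 1_{{T<τ}}), for every t ∈ [0,T] one has e^{-rt}D(t) = E_Q[e^{-rT}D(T) | G_t] Q-a.s. -/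
/-!
On the survival event `{t < τ}` every event of `G_t = F_t ∨ σ({τ ≤ u} : u ≤ t)` agrees with an
event of `F_t`, and both `e^{-rt} D(t)` and `e^{-rT} D(T)` vanish off that event; so it suffices
to compare their integrals over events `B ∈ F_t`. There, conditioning on `F_T` replaces
`1_{t<τ}` by `G(t)` and `1_{T<τ}` by `G(T)`, after which the integrals agree by the assumed
martingale property of `e^{-rt} c(t) G(t)` and the tower property.
-/

open MeasureTheory

theorem MeasurableSpace.exists_inter_eq_of_measurableSet_sup_generateFrom
    {Ω : Type*} {m : MeasurableSpace Ω} {C : Set (Set Ω)} {S : Set Ω}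
    (hC : ∀ A ∈ C, Disjoint S A) {A : Set Ω} (hA : MeasurableSet[m ⊔ generateFrom C] A) :
    ∃ B, MeasurableSet[m] B ∧ S ∩ A = S ∩ B := by
  -- `(m.comap (↑)).map (↑)` consists of the sets whose trace on `S` is the trace of an `m`-set.
  have htrace : m ⊔ generateFrom C ≤ (m.comap ((↑) : S → Ω)).map (↑) := by
    rw [← comap_le_iff_le_map, comap_sup, comap_generateFrom]
    refine sup_le le_rfl (generateFrom_le ?_)
    rintro _ ⟨A, hA, rfl⟩
    rw [Subtype.preimage_coe_eq_empty.2 (Set.disjoint_iff_inter_eq_empty.1 (hC A hA))]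
    exact MeasurableSet.empty
  obtain ⟨B, hB, hBA⟩ := htrace A hA
  exact ⟨B, hB, (Subtype.preimage_coe_eq_preimage_coe_iff.1 hBA).symm⟩

theorem setIntegral_eq_of_inter_eq {Ω E : Type*} [MeasurableSpace Ω] [NormedAddCommGroup E]
    [NormedSpace ℝ E] {μ : Measure Ω} {f : Ω → E} {S A B : Set Ω} (hS : MeasurableSet S)
    (hf : Function.support f ⊆ S) (hAB : S ∩ A = S ∩ B) :
    ∫ ω in A, f ω ∂μ = ∫ ω in B, f ω ∂μ := by
  have hrestrict (s : Set Ω) : ∫ ω in s, f ω ∂μ = ∫ ω in s ∩ S, f ω ∂μ := by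
    rw [← setIntegral_indicator hS, Set.indicator_eq_self.2 hf]
  rw [hrestrict, hrestrict B, Set.inter_comm, hAB, Set.inter_comm]

section CondExp

variable {Ω : Type*} {m m0 : MeasurableSpace Ω} {μ : Measure Ω} [IsFiniteMeasure μ]

theorem setIntegral_mul_eq_of_ae_eq_condExp (hm : m ≤ m0) {φ f g : Ω → ℝ}
    (hφ : StronglyMeasurable[m] φ) {C : ℝ} (hφC : ∀ᵐ ω ∂μ, ‖φ ω‖ ≤ C) (hf : Integrable f μ)
    (hg : g =ᵐ[μ] μ[f | m]) {s : Set Ω} (hs : MeasurableSet[m] s) :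
    ∫ ω in s, φ ω * g ω ∂μ = ∫ ω in s, φ ω * f ω ∂μ := by
  calc ∫ ω in s, φ ω * g ω ∂μ = ∫ ω in s, μ[φ * f | m] ω ∂μ := by
        refine setIntegral_congr_ae (hm s hs) ?_
        filter_upwards [hg, condExp_stronglyMeasurable_mul_of_bound hm hφ hf C hφC] with ω hgω hω _
        rw [hω, Pi.mul_apply, hgω]
    _ = ∫ ω in s, φ ω * f ω ∂μ :=
        setIntegral_condExp hm (hf.bdd_mul (hφ.mono hm).aestronglyMeasurable hφC) hs

theorem ae_eq_condExp_indicator_one_of_setIntegral_eq (hm : m ≤ m0) {S : Set Ω}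
    (hS : MeasurableSet[m0] S) {g : Ω → ℝ} (hg_meas : StronglyMeasurable[m] g)
    (hg_int : Integrable g μ)
    (hg : ∀ A, MeasurableSet[m] A → ∫ ω in A, g ω ∂μ = μ.real (A ∩ S)) :
    g =ᵐ[μ] μ[S.indicator 1 | m] := by
  refine ae_eq_condExp_of_forall_setIntegral_eq hm ((integrable_const 1).indicator hS)
    (fun _ _ _ => hg_int.integrableOn) (fun A hA _ => ?_) hg_meas.aestronglyMeasurable
  rw [hg A hA, setIntegral_indicator hS]
  simp

theorem setIntegral_const_mul_indicator_eq_of_ae_eq_condExp {m' : MeasurableSpace Ω}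
    (hmm' : m ≤ m') (hm' : m' ≤ m0) {S S' : Set Ω} (hS : MeasurableSet[m0] S)
    (hS' : MeasurableSet[m0] S') {g g' : Ω → ℝ} (hg : g =ᵐ[μ] μ[S.indicator 1 | m'])
    (hg' : g' =ᵐ[μ] μ[S'.indicator 1 | m']) {ψ : Ω → ℝ} (hψ : StronglyMeasurable[m] ψ) {C : ℝ}
    (hψC : ∀ᵐ ω ∂μ, ‖ψ ω‖ ≤ C) (a b : ℝ)
    (hmart : (fun ω => a * (ψ ω * g ω)) =ᵐ[μ] μ[fun ω => b * g' ω | m]) {B : Set Ω}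
    (hB : MeasurableSet[m] B) :
    ∫ ω in B, a * S.indicator ψ ω ∂μ = ∫ ω in B, b * S'.indicator 1 ω ∂μ := by
  have hB' : MeasurableSet[m'] B := hmm' B hB
  have hg'_int : Integrable g' μ := integrable_condExp.congr hg'.symm
  have hφC : ∀ᵐ ω ∂μ, ‖a * ψ ω‖ ≤ ‖a‖ * C :=
    hψC.mono fun ω h => (norm_mul a (ψ ω)).trans_le (mul_le_mul_of_nonneg_left h (norm_nonneg a))
  calc ∫ ω in B, a * S.indicator ψ ω ∂μ = ∫ ω in B, a * ψ ω * S.indicator 1 ω ∂μ := by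
        simp only [mul_assoc, ← Set.indicator_mul_right, Pi.one_apply, mul_one]
    _ = ∫ ω in B, a * (ψ ω * g ω) ∂μ := by
        simp only [← mul_assoc]
        exact (setIntegral_mul_eq_of_ae_eq_condExp hm' ((hψ.mono hmm').const_mul a) hφC
          ((integrable_const 1).indicator hS) hg hB').symm
    _ = ∫ ω in B, b * g' ω ∂μ := by
        rw [setIntegral_congr_ae ((hmm'.trans hm') B hB) (hmart.mono fun _ h _ => h),
          setIntegral_condExp (hmm'.trans hm') (hg'_int.const_mul b) hB]
    _ = ∫ ω in B, b * S'.indicator 1 ω ∂μ :=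
        setIntegral_mul_eq_of_ae_eq_condExp hm' stronglyMeasurable_const
          (ae_of_all _ fun _ => le_rfl) ((integrable_const 1).indicator hS') hg' hB'

end CondExp

abbrev progEnlargement {Ω : Type*} (F : MeasurableSpace Ω) (τ : Ω → ℝ) (t : ℝ) :
    MeasurableSpace Ω :=
  F ⊔ MeasurableSpace.generateFrom {A | ∃ u : ℝ, 0 ≤ u ∧ u ≤ t ∧ A = {ω | τ ω ≤ u}}

namespace progEnlargement

variable {Ω : Type*} {F : MeasurableSpace Ω} {τ : Ω → ℝ} {t : ℝ}

theorem le : F ≤ progEnlargement F τ t := le_sup_left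

theorem mono {F' : MeasurableSpace Ω} {t' : ℝ} (hF : F ≤ F') (ht : t ≤ t') :
    progEnlargement F τ t ≤ progEnlargement F' τ t' :=
  sup_le_sup hF <| MeasurableSpace.generateFrom_mono
    fun _ ⟨u, hu0, hut, hA⟩ => ⟨u, hu0, hut.trans ht, hA⟩

theorem measurableSet_lt {u : ℝ} (hu0 : 0 ≤ u) (hut : u ≤ t) :
    MeasurableSet[progEnlargement F τ t] {ω | u < τ ω} := by
  have hle : MeasurableSet[progEnlargement F τ t] {ω | τ ω ≤ u} :=
    le_sup_right (a := F) _ (MeasurableSpace.measurableSet_generateFrom ⟨u, hu0, hut, rfl⟩)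
  simpa only [Set.compl_ofPred, not_le] using hle.compl

theorem exists_inter_eq {A : Set Ω} (hA : MeasurableSet[progEnlargement F τ t] A) :
    ∃ B, MeasurableSet[F] B ∧ {ω | t < τ ω} ∩ A = {ω | t < τ ω} ∩ B := by
  refine MeasurableSpace.exists_inter_eq_of_measurableSet_sup_generateFrom ?_ hA
  rintro _ ⟨u, -, hut, rfl⟩
  exact Set.disjoint_left.2 fun ω hlt hle => (hle.trans hut).not_gt hlt

theorem ae_eq_condExp_of_setIntegral_eq {E : Type*} [NormedAddCommGroup E] [NormedSpace ℝ E]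
    [CompleteSpace E] {m0 : MeasurableSpace Ω} {μ : Measure Ω} [IsFiniteMeasure μ]
    (hle : progEnlargement F τ t ≤ m0) (ht : 0 ≤ t) {X Y : Ω → E}
    (hX_supp : Function.support X ⊆ {ω | t < τ ω}) (hY_supp : Function.support Y ⊆ {ω | t < τ ω})
    (hX : StronglyMeasurable[progEnlargement F τ t] X) (hX_int : Integrable X μ)
    (hY_int : Integrable Y μ)
    (hXY : ∀ B, MeasurableSet[F] B → ∫ ω in B, X ω ∂μ = ∫ ω in B, Y ω ∂μ) :
    X =ᵐ[μ] μ[Y | progEnlargement F τ t] := by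
  have hS : MeasurableSet[m0] {ω | t < τ ω} := hle _ (measurableSet_lt ht le_rfl)
  refine ae_eq_condExp_of_forall_setIntegral_eq hle hY_int (fun _ _ _ => hX_int.integrableOn)
    (fun A hA _ => ?_) hX.aestronglyMeasurable
  obtain ⟨B, hB, hAB⟩ := exists_inter_eq hA
  rw [setIntegral_eq_of_inter_eq hS hX_supp hAB, hXY B hB,
    setIntegral_eq_of_inter_eq hS hY_supp hAB]

end progEnlargement

theorem stmt5_general {Ω : Type*} (T r : ℝ)
    (F : ℝ → MeasurableSpace Ω)
    (hF_mono : ∀ s t : ℝ, 0 ≤ s → s ≤ t → t ≤ T → F s ≤ F t)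
    (τ : Ω → ℝ)
    (GG : ℝ → MeasurableSpace Ω)
    (hGG : ∀ t, GG t = F t ⊔ MeasurableSpace.generateFrom
      {A | ∃ u : ℝ, 0 ≤ u ∧ u ≤ t ∧ A = {ω | τ ω ≤ u}})
    (Q : @Measure Ω (GG T)) (hQ : @IsProbabilityMeasure Ω (GG T) Q)
    (c : ℝ → Ω → ℝ)
    (hc_adapted : ∀ t ∈ Set.Icc (0 : ℝ) T, Measurable[F t] (c t))
    (hc_mem : ∀ t ∈ Set.Icc (0 : ℝ) T, ∀ ω, c t ω ∈ Set.Ioc (0 : ℝ) 1)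
    (hc_T : ∀ ω, c T ω = 1)
    (G : ℝ → Ω → ℝ)
    (hG_mem : ∀ t ∈ Set.Icc (0 : ℝ) T, ∀ ω, G t ω ∈ Set.Ioc (0 : ℝ) 1)
    (hG_meas : ∀ t ∈ Set.Icc (0 : ℝ) T, Measurable[F t] (G t))
    (hG_version : ∀ t ∈ Set.Icc (0 : ℝ) T, ∀ A : Set Ω, MeasurableSet[F T] A →
      ∫ ω in A, G t ω ∂Q = (Q (A ∩ {ω | t < τ ω})).toReal)
    (hmart : ∀ t ∈ Set.Icc (0 : ℝ) T,
      (fun ω => Real.exp (-(r * t)) * (c t ω * G t ω)) =ᵐ[Q]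
        Q[fun ω => Real.exp (-(r * T)) * G T ω | F t]) :
    ∀ t ∈ Set.Icc (0 : ℝ) T,
      (fun ω => Real.exp (-(r * t)) *
          Set.indicator {ω | t < τ ω} (fun ω => c t ω) ω) =ᵐ[Q]
        Q[fun ω => Real.exp (-(r * T)) *
          Set.indicator {ω | T < τ ω} (fun ω => c T ω) ω | GG t] := by
  rintro t ⟨ht0, htT⟩
  have ht : t ∈ Set.Icc 0 T := ⟨ht0, htT⟩
  have hT : T ∈ Set.Icc 0 T := ⟨ht0.trans htT, le_rfl⟩
  have hFtT : F t ≤ F T := hF_mono t T ht0 htT le_rfl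
  have hFT : F T ≤ GG T := hGG T ▸ progEnlargement.le
  have hF_GG (s : ℝ) (hs : s ∈ Set.Icc 0 T) : F s ≤ GG T := (hF_mono s T hs.1 hs.2 le_rfl).trans hFT
  have hS (s : ℝ) (hs : s ∈ Set.Icc 0 T) : MeasurableSet[GG T] {ω | s < τ ω} :=
    hGG T ▸ progEnlargement.measurableSet_lt hs.1 hs.2
  have hnorm {x : ℝ} (hx : x ∈ Set.Ioc 0 1) : ‖x‖ ≤ 1 := by
    rw [Real.norm_of_nonneg hx.1.le]; exact hx.2
  have hG (s : ℝ) (hs : s ∈ Set.Icc 0 T) : G s =ᵐ[Q] Q[{ω | s < τ ω}.indicator 1 | F T] := by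
    have hGs := ((hG_meas s hs).mono (hF_mono s T hs.1 hs.2 le_rfl) le_rfl).stronglyMeasurable
    refine ae_eq_condExp_indicator_one_of_setIntegral_eq hFT (hS s hs) hGs ?_ (hG_version s hs)
    exact .of_bound ((hG_meas s hs).mono (hF_GG s hs) le_rfl).aestronglyMeasurable 1
      (ae_of_all _ fun ω => hnorm (hG_mem s hs ω))
  have hc_int (s : ℝ) (hs : s ∈ Set.Icc 0 T) : Integrable (c s) Q :=
    .of_bound ((hc_adapted s hs).mono (hF_GG s hs) le_rfl).aestronglyMeasurable 1
      (ae_of_all _ fun ω => hnorm (hc_mem s hs ω))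
  rw [hGG t]
  refine progEnlargement.ae_eq_condExp_of_setIntegral_eq
    (hGG T ▸ progEnlargement.mono hFtT htT) ht0
    ((Function.support_mul_subset_right _ _).trans Set.support_indicator_subset)
    (((Function.support_mul_subset_right _ _).trans Set.support_indicator_subset).trans
      fun ω hω => htT.trans_lt hω) ?_ (((hc_int t ht).indicator (hS t ht)).const_mul _)
    (((hc_int T hT).indicator (hS T hT)).const_mul _) fun B hB => ?_
  · exact stronglyMeasurable_const.mul
      (((hc_adapted t ht).stronglyMeasurable.mono progEnlargement.le).indicator
        (progEnlargement.measurableSet_lt ht0 le_rfl))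
  · simp only [hc_T]
    exact setIntegral_const_mul_indicator_eq_of_ae_eq_condExp hFtT hFT (hS t ht) (hS T hT)
      (hG t ht) (hG T hT) (hc_adapted t ht).stronglyMeasurable
      (ae_of_all _ fun ω => hnorm (hc_mem t ht ω)) _ _ (hmart t ht) hB

/-- Let `(Ω, Σ)` be a measurable space with a filtration `(F_t)_{t∈[0,T]}`,
`T > 0`, `r ≥ 0`, and let `τ : Ω → (0,∞)` be a random variable with `{τ ≤ u} ∈ Σ` for all
`u`. For `t ∈ [0,T]` set `I_t := σ({τ ≤ u} : u ∈ [0,t])` and `G_t := σ(F_t ∪ I_t)`. Let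
`Q` be a probability measure on `G_T`. Let `c = (c(t))_{t∈[0,T]}` be an `(F_t)`-adapted
process with values in `(0,1]` and `c(T) = 1`, and let `G = (G(t))_{t∈[0,T]}` be a process
with values in `(0,1]` such that each `G(t)` is `F_t`-measurable and is a version of
`Q(t < τ | F_T)`.  Suppose that for each `t ∈ [0,T]` one has
`e^{-rt}c(t)G(t) = E_Q[e^{-rT}G(T) | F_t]` `Q`-a.s.  Then, writing `D(t) := c(t)·1_{t<τ}`
(so that `D(T) = 1_{T<τ}`), for every `t ∈ [0,T]` one has
`e^{-rt}D(t) = E_Q[e^{-rT}D(T) | G_t]` `Q`-a.s. -/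
theorem stmt5 {Ω : Type*} {mΩ : MeasurableSpace Ω} (T r : ℝ) (hT : 0 < T) (hr : 0 ≤ r)
    (F : ℝ → MeasurableSpace Ω)
    (hF_mono : ∀ s t : ℝ, 0 ≤ s → s ≤ t → t ≤ T → F s ≤ F t)
    (hF_le : ∀ t ∈ Set.Icc (0 : ℝ) T, F t ≤ mΩ)
    (τ : Ω → ℝ) (hτ_pos : ∀ ω, 0 < τ ω)
    (hτ_meas : ∀ u : ℝ, MeasurableSet {ω | τ ω ≤ u})
    (GG : ℝ → MeasurableSpace Ω)
    (hGG : ∀ t, GG t = F t ⊔ MeasurableSpace.generateFrom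
      {A | ∃ u : ℝ, 0 ≤ u ∧ u ≤ t ∧ A = {ω | τ ω ≤ u}})
    (Q : @Measure Ω (GG T)) (hQ : @IsProbabilityMeasure Ω (GG T) Q)
    (c : ℝ → Ω → ℝ)
    (hc_adapted : ∀ t ∈ Set.Icc (0 : ℝ) T, Measurable[F t] (c t))
    (hc_mem : ∀ t ∈ Set.Icc (0 : ℝ) T, ∀ ω, c t ω ∈ Set.Ioc (0 : ℝ) 1)
    (hc_T : ∀ ω, c T ω = 1)
    (G : ℝ → Ω → ℝ)
    (hG_mem : ∀ t ∈ Set.Icc (0 : ℝ) T, ∀ ω, G t ω ∈ Set.Ioc (0 : ℝ) 1)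
    (hG_meas : ∀ t ∈ Set.Icc (0 : ℝ) T, Measurable[F t] (G t))
    (hG_version : ∀ t ∈ Set.Icc (0 : ℝ) T, ∀ A : Set Ω, MeasurableSet[F T] A →
      ∫ ω in A, G t ω ∂Q = (Q (A ∩ {ω | t < τ ω})).toReal)
    (hmart : ∀ t ∈ Set.Icc (0 : ℝ) T,
      (fun ω => Real.exp (-(r * t)) * (c t ω * G t ω)) =ᵐ[Q]
        Q[fun ω => Real.exp (-(r * T)) * G T ω | F t]) :
    ∀ t ∈ Set.Icc (0 : ℝ) T,
      (fun ω => Real.exp (-(r * t)) *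
          Set.indicator {ω | t < τ ω} (fun ω => c t ω) ω) =ᵐ[Q]
        Q[fun ω => Real.exp (-(r * T)) *
          Set.indicator {ω | T < τ ω} (fun ω => c T ω) ω | GG t] :=
  stmt5_general T r F hF_mono τ GG hGG Q hQ c hc_adapted hc_mem hc_T G hG_mem hG_meas hG_version
    hmart
end

section
/- Suppose that the NBDSA principle holds. Then there exists an (F_t)_{t∈[0,T]}-adapted process c = (c(t))_{t∈[0,T]} with all paths continuous, such that c(t) ∈ (0,1) a.s. for every t ∈ [0,T), c(T) = 1, and for every t ∈ [0,T] one has D(t,T) = c(t)·1_{{t<τ}} P-a.s. -/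
/-!
On `{t < τ}` the σ-algebra `G_t` coincides with `F_t`, so `D(t)` agrees there with an
`F_t`-measurable `f(t)`. By the hypothesis on the conditional law of `τ`, every `F_T`-event of
positive probability meets `{T < τ}` with positive probability; hence whatever holds for `f` on
the survivors holds almost surely. On the survivors the paths of `D` are continuous on `[0, T]`
and end at `1`, so the values of `f` at rational times yield an adapted process `c` with
continuous paths, `c(T) = 1` and `c = f` a.s. Finally NBDSA excludes, through one-period
strategies entered at `t` and financed by the bond, that `D(t) ≠ 0` after default,
that `f(t) ≤ 0`, and that `f(t) ≥ B(t, T)`.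
-/

open MeasureTheory

/-- The enlarged filtration `G_t := σ(F_t ∪ I_t)`, where
`I_t := σ({τ ≤ u} : u ∈ [0,t])`. -/
def enlarge {Ω : Type*} (F : ℝ → MeasurableSpace Ω) (τ : Ω → ℝ) (t : ℝ) :
    MeasurableSpace Ω :=
  F t ⊔ MeasurableSpace.generateFrom {A | ∃ u : ℝ, 0 ≤ u ∧ u ≤ t ∧ A = {ω | τ ω ≤ u}}

/-- The value process `V_ψ(t) = ψ^B(t)B(t,T) + ψ^D(t)D(t,T)`, with
`B(t,T) = e^{-r(T-t)}`. -/
noncomputable def BDvalue {Ω : Type*} (r T : ℝ) (D : ℝ → Ω → ℝ) (ψB ψD : ℝ → Ω → ℝ) (t : ℝ)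
    (ω : Ω) : ℝ :=
  ψB t ω * Real.exp (-(r * (T - t))) + ψD t ω * D t ω

/-- `ψ = (ψB, ψD)` is a `BD`-simple self-financing strategy. -/
def IsBDSimpleSelfFinancing {Ω : Type*} [MeasurableSpace Ω] (P : Measure Ω)
    (F : ℝ → MeasurableSpace Ω) (τ : Ω → ℝ) (D : ℝ → Ω → ℝ) (r T : ℝ)
    (ψB ψD : ℝ → Ω → ℝ) : Prop :=
  (∀ t ∈ Set.Icc (0 : ℝ) T,
    Measurable[enlarge F τ t] (ψB t) ∧ Measurable[enlarge F τ t] (ψD t)) ∧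
  ∃ (N : ℕ) (s : ℕ → ℝ) (x y : ℕ → Ω → ℝ),
    0 < N ∧ s 0 = 0 ∧ s N = T ∧
    (∀ n, n < N → s n < s (n + 1)) ∧
    (∀ n, 1 ≤ n → n ≤ N → Measurable[enlarge F τ (s (n - 1))] (x n) ∧
      Measurable[enlarge F τ (s (n - 1))] (y n)) ∧
    (∀ n, 1 ≤ n → n ≤ N → ∀ t ∈ Set.Ioc (s (n - 1)) (s n), ψB t = x n ∧ ψD t = y n) ∧
    (∀ n, n < N → ∀ᵐ ω ∂P,
      Filter.Tendsto (fun t => BDvalue r T D ψB ψD t ω)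
        (nhdsWithin (s n) (Set.Ioi (s n))) (nhds (BDvalue r T D ψB ψD (s n) ω)))

/-- The no-`BD`-simple-arbitrage (NBDSA) principle. -/
def NBDSA {Ω : Type*} [MeasurableSpace Ω] (P : Measure Ω)
    (F : ℝ → MeasurableSpace Ω) (τ : Ω → ℝ) (D : ℝ → Ω → ℝ) (r T : ℝ) : Prop :=
  ¬ ∃ ψB ψD : ℝ → Ω → ℝ, IsBDSimpleSelfFinancing P F τ D r T ψB ψD ∧
    (∀ᵐ ω ∂P, BDvalue r T D ψB ψD 0 ω = 0) ∧
    (∀ᵐ ω ∂P, 0 ≤ BDvalue r T D ψB ψD T ω) ∧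
    0 < P {ω | 0 < BDvalue r T D ψB ψD T ω}

open Set Filter Topology Real

section General

variable {Ω : Type*}

theorem measurable_of_ae_eq_of_forall_null {β : Type*} [MeasurableSpace β]
    {m m₀ : MeasurableSpace Ω} {μ : Measure[m₀] Ω} (hm : m ≤ m₀)
    (hnull : ∀ A, MeasurableSet[m₀] A → μ A = 0 → MeasurableSet[m] A)
    {f g : Ω → β} (hf : Measurable[m] f) (hg : Measurable[m₀] g) (hfg : f =ᵐ[μ] g) :
    Measurable[m] g := by
  intro s hs
  have hdiff : MeasurableSet[m] (symmDiff (f ⁻¹' s) (g ⁻¹' s)) := by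
    refine hnull _ ((hf.mono hm le_rfl hs).symmDiff (hg hs)) (measure_mono_null ?_ (ae_iff.1 hfg))
    rintro ω (⟨h₁, h₂⟩ | ⟨h₁, h₂⟩) heq <;> simp_all
  simpa only [symmDiff_symmDiff_cancel_left] using (hf hs).symmDiff hdiff

theorem measure_eq_zero_of_measure_inter_eq_zero {m m₀ : MeasurableSpace Ω}
    {μ : Measure[m₀] Ω} [IsFiniteMeasure μ] (hm : m ≤ m₀) {B : Set Ω}
    (hB : MeasurableSet[m₀] B)
    (hpos : ∀ᵐ ω ∂μ, 0 < μ[B.indicator (fun _ => (1 : ℝ)) | m] ω)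
    {A : Set Ω} (hA : MeasurableSet[m] A) (hAB : μ (A ∩ B) = 0) : μ A = 0 := by
  have hint : ∫ ω in A, μ[B.indicator (fun _ => (1 : ℝ)) | m] ω ∂μ = 0 := by
    rw [setIntegral_condExp hm ((integrable_const 1).indicator hB) hA,
      setIntegral_indicator hB, setIntegral_const]
    simp [Measure.real, hAB]
  rw [setIntegral_eq_zero_iff_of_nonneg_ae (ae_restrict_of_ae (hpos.mono fun _ h => h.le))
    integrable_condExp.integrableOn] at hint
  have hfalse : ∀ᵐ ω ∂μ.restrict A, False := by
    filter_upwards [hint, ae_restrict_of_ae hpos] with ω h₀ h₁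
    simp_all
  simpa using ae_iff.1 hfalse

theorem UniformContinuousOn.exists_tendsto_nhdsWithin {α β : Type*} [UniformSpace α]
    [UniformSpace β] [CompleteSpace β] {g : α → β} {s : Set α} (hg : UniformContinuousOn g s)
    {x : α} (hx : x ∈ closure s) : ∃ y, Tendsto g (𝓝[s] x) (𝓝 y) :=
  haveI := mem_closure_iff_nhdsWithin_neBot.1 hx
  CompleteSpace.complete ((cauchy_nhds.mono nhdsWithin_le_nhds).map_of_le hg inf_le_right)

theorem measurableSet_setOf_uniformContinuousOn [MeasurableSpace Ω] {α : Type*}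
    [PseudoMetricSpace α] {s : Set α} (hs : s.Countable) {f : α → Ω → ℝ}
    (hf : ∀ x ∈ s, Measurable (f x)) :
    MeasurableSet {ω | UniformContinuousOn (f · ω) s} := by
  simp_rw [Metric.uniformity_basis_dist_inv_nat_succ.uniformContinuousOn_iff
    Metric.uniformity_basis_dist_inv_nat_succ]
  simp only [true_implies, true_and, mem_ofPred_eq, SetCoe.forall']
  have := hs.to_subtype
  exact Measurable.setOf <| .forall fun _ => .exists fun _ => .forall fun x => .forall fun y =>
    measurable_const.imp (measurableSet_lt ((hf x x.2).dist (hf y y.2)) measurable_const).mem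

theorem Icc_subset_closure_inter_range_ratCast {a b : ℝ} (hab : a < b) :
    Icc a b ⊆ closure (Icc a b ∩ range ((↑) : ℚ → ℝ)) :=
  calc Icc a b = closure (Ioo a b) := (closure_Ioo hab.ne).symm
    _ ⊆ closure (closure (Ioo a b ∩ range ((↑) : ℚ → ℝ))) :=
      closure_mono (Rat.denseRange_cast.open_subset_closure_inter isOpen_Ioo)
    _ ⊆ closure (Icc a b ∩ range ((↑) : ℚ → ℝ)) := by
      rw [closure_closure]
      exact closure_mono (inter_subset_inter_left _ Ioo_subset_Icc_self)

theorem exists_continuousOn_modification {m : MeasurableSpace Ω} {a b : ℝ} (hab : a < b)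
    (f : ℝ → Ω → ℝ) (hf : ∀ v ∈ Icc a b, Measurable (f v)) :
    ∃ g : ℝ → Ω → ℝ, (∀ v ∈ Icc a b, Measurable (g v)) ∧
      (∀ ω, ContinuousOn (g · ω) (Icc a b)) ∧
      ∀ ω (h : ℝ → ℝ), ContinuousOn h (Icc a b) →
        EqOn (f · ω) h (Icc a b ∩ range ((↑) : ℚ → ℝ)) →
        EqOn (g · ω) h (Icc a b) := by
  classical
  have hdense := Icc_subset_closure_inter_range_ratCast hab
  set S := Icc a b ∩ range ((↑) : ℚ → ℝ)
  have hSI : S ⊆ Icc a b := inter_subset_left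
  choose! u hu_mem hu_lim using fun v (hv : v ∈ Icc a b) =>
    mem_closure_iff_seq_limit.1 (hdense hv)
  set W := {ω | UniformContinuousOn (f · ω) S}
  have hW : MeasurableSet W := measurableSet_setOf_uniformContinuousOn
    ((countable_range _).mono inter_subset_right) fun x hx => hf x (hSI hx)
  have hlim : ∀ ω ∈ W, ∀ v ∈ Icc a b,
      Tendsto (f · ω) (𝓝[S] v) (𝓝 (extendFrom S (f · ω) v)) := fun ω hω v hv =>
    tendsto_extendFrom ((show UniformContinuousOn (f · ω) S from hω).exists_tendsto_nhdsWithin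
      (hdense hv))
  have hliminf : ∀ ω ∈ W, ∀ v ∈ Icc a b,
      liminf (fun n => f (u v n) ω) atTop = extendFrom S (f · ω) v := fun ω hω v hv =>
    ((hlim ω hω v hv).comp (tendsto_nhdsWithin_iff.2
      ⟨hu_lim v hv, .of_forall (hu_mem v hv)⟩)).liminf_eq
  refine ⟨fun v ω => if ω ∈ W then liminf (fun n => f (u v n) ω) atTop else 0,
    fun v hv => .ite hW (.liminf fun n => hf _ (hSI (hu_mem v hv n))) measurable_const,
    fun ω => ?_, fun ω h hh hfh => ?_⟩
  · by_cases hω : ω ∈ W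
    · refine (continuousOn_extendFrom hdense fun v hv => ⟨_, hlim ω hω v hv⟩).congr ?_
      intro v hv
      simp only [if_pos hω, hliminf ω hω v hv]
    · simp only [if_neg hω]
      exact continuousOn_const
  · have hω : ω ∈ W := ((isCompact_Icc.uniformContinuousOn_of_continuous hh).mono hSI).congr
      fun x hx => (hfh hx).symm
    intro v hv
    simp only [if_pos hω, hliminf ω hω v hv]
    exact extendFrom_eq (hdense hv) (((hh v hv).mono hSI).tendsto.congr'
      (eventually_nhdsWithin_of_forall fun x hx => (hfh hx).symm))

theorem continuousWithinAt_Ioi_of_continuousOn_Iio {f : ℝ → ℝ} {a T σ v : ℝ}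
    (hcont : ContinuousOn f (Icc a T ∩ Iio σ))
    (hrc : ∀ t ∈ Icc a T, σ ≤ t → ContinuousWithinAt f (Ici t) t) (hv : v ∈ Ico a T) :
    ContinuousWithinAt f (Ioi v) v := by
  rcases le_or_gt σ v with hσ | hσ
  · exact (hrc v (Ico_subset_Icc_self hv) hσ).mono Ioi_subset_Ici_self
  · refine (hcont v ⟨Ico_subset_Icc_self hv, hσ⟩).mono_of_mem_nhdsWithin
      (mem_of_superset (Ioo_mem_nhdsGT (lt_min hv.2 hσ)) fun x hx => ?_)
    exact ⟨⟨hv.1.trans hx.1.le, hx.2.le.trans (min_le_left _ _)⟩,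
      hx.2.trans_le (min_le_right _ _)⟩

end General

section Enlarge

variable {Ω : Type*} {F : ℝ → MeasurableSpace Ω} {τ : Ω → ℝ} {s t u : ℝ}

theorem enlarge_mono (hst : s ≤ t) (hF : F s ≤ F t) : enlarge F τ s ≤ enlarge F τ t :=
  sup_le_sup hF <| MeasurableSpace.generateFrom_mono fun _ ⟨u, hu0, hus, hA⟩ =>
    ⟨u, hu0, hus.trans hst, hA⟩

theorem measurableSet_enlarge_tau_le (hu : 0 ≤ u) (hut : u ≤ t) :
    MeasurableSet[enlarge F τ t] {ω | τ ω ≤ u} :=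
  le_sup_right (a := F t) _ (MeasurableSpace.measurableSet_generateFrom ⟨u, hu, hut, rfl⟩)

theorem measurableSet_enlarge_lt_tau (ht : 0 ≤ t) :
    MeasurableSet[enlarge F τ t] {ω | t < τ ω} := by
  simpa only [compl_ofPred, not_le] using
    (measurableSet_enlarge_tau_le (F := F) (τ := τ) ht le_rfl).compl

theorem MeasurableSet.inter_lt_tau_enlarge {B : Set Ω} (hB : MeasurableSet[F t] B)
    (ht : 0 ≤ t) : MeasurableSet[enlarge F τ t] (B ∩ {ω | t < τ ω}) :=
  (le_sup_left (a := F t) _ hB).inter (measurableSet_enlarge_lt_tau ht)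

theorem comap_enlarge_le_comap :
    (enlarge F τ t).comap ((↑) : {ω // t < τ ω} → Ω) ≤ (F t).comap (↑) := by
  rw [enlarge, MeasurableSpace.comap_sup, MeasurableSpace.comap_generateFrom]
  refine sup_le le_rfl (MeasurableSpace.generateFrom_le ?_)
  rintro _ ⟨_, ⟨u, -, hut, rfl⟩, rfl⟩
  convert @MeasurableSet.empty _ ((F t).comap ((↑) : {ω // t < τ ω} → Ω))
  ext ⟨ω, hω⟩
  simp only [mem_preimage, mem_ofPred_eq, mem_empty_iff_false, iff_false, not_le]
  exact hut.trans_lt hω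

theorem exists_measurable_eqOn_of_measurable_enlarge {Z : Type*} [MeasurableSpace Z]
    [StandardBorelSpace Z] [Nonempty Z] {X : Ω → Z} (hX : Measurable[enlarge F τ t] X) :
    ∃ f : Ω → Z, Measurable[F t] f ∧ EqOn X f {ω | t < τ ω} := by
  have hXt : Measurable[(F t).comap (↑)] (X ∘ ((↑) : {ω // t < τ ω} → Ω)) :=
    (hX.comp (comap_measurable _)).mono comap_enlarge_le_comap le_rfl
  obtain ⟨f, hf, hXf⟩ := hXt.exists_eq_measurable_comp (mY := F t)
  exact ⟨f, hf, fun ω hω => congrFun hXf ⟨ω, hω⟩⟩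

end Enlarge

section HoldStrategy

variable {Ω : Type*} {t : ℝ}

noncomputable def holdFrom (t : ℝ) (x : Ω → ℝ) (u : ℝ) : Ω → ℝ :=
  if t < u then x else 0

theorem holdFrom_congr (x : Ω → ℝ) {u v : ℝ} (h : t < u ↔ t < v) :
    holdFrom t x u = holdFrom t x v := by
  simp only [holdFrom, h]

theorem measurable_holdFrom {m m' : MeasurableSpace Ω} {x : Ω → ℝ} {u : ℝ}
    (hx : Measurable[m] x) (h : t < u → m ≤ m') : Measurable[m'] (holdFrom t x u) := by
  by_cases htu : t < u
  · rw [holdFrom, if_pos htu]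
    exact hx.mono (h htu) le_rfl
  · rw [holdFrom, if_neg htu]
    exact measurable_const

variable {r T : ℝ} {D : ℝ → Ω → ℝ} {x y : Ω → ℝ} {u : ℝ} {ω : Ω}

theorem BDvalue_holdFrom_of_le (h : u ≤ t) :
    BDvalue r T D (holdFrom t x) (holdFrom t y) u ω = 0 := by
  simp [BDvalue, holdFrom, not_lt.2 h]

theorem BDvalue_holdFrom_of_lt (h : t < u) :
    BDvalue r T D (holdFrom t x) (holdFrom t y) u ω =
      x ω * exp (-(r * (T - u))) + y ω * D u ω := by
  simp [BDvalue, holdFrom, h]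

theorem continuousWithinAt_BDvalue_holdFrom
    (hcost : x ω * exp (-(r * (T - t))) + y ω * D t ω = 0) {v : ℝ}
    (hD : ContinuousWithinAt (D · ω) (Ioi v) v) :
    ContinuousWithinAt (BDvalue r T D (holdFrom t x) (holdFrom t y) · ω) (Ioi v) v := by
  rcases lt_or_ge v t with hvt | htv
  · rw [ContinuousWithinAt, BDvalue_holdFrom_of_le hvt.le]
    refine tendsto_const_nhds.congr' ?_
    filter_upwards [Ioo_mem_nhdsGT hvt] with u hu
    exact (BDvalue_holdFrom_of_le hu.2.le).symm
  · have hval : BDvalue r T D (holdFrom t x) (holdFrom t y) v ω =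
        x ω * exp (-(r * (T - v))) + y ω * D v ω := by
      rcases htv.eq_or_lt with rfl | htv
      · rw [BDvalue_holdFrom_of_le le_rfl, hcost]
      · exact BDvalue_holdFrom_of_lt htv
    rw [ContinuousWithinAt, hval]
    refine (((by fun_prop : Continuous fun u => x ω * exp (-(r * (T - u)))).continuousWithinAt
      (s := Ioi v) (x := v)).add (hD.const_mul (y ω))).congr' ?_
    filter_upwards [self_mem_nhdsWithin] with u hu
    exact (BDvalue_holdFrom_of_lt (htv.trans_lt hu)).symm

end HoldStrategy

section NoArbitrage

variable {Ω : Type*} [MeasurableSpace Ω] {P : Measure Ω} {F : ℝ → MeasurableSpace Ω}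
  {τ : Ω → ℝ} {D : ℝ → Ω → ℝ} {r T t : ℝ}

theorem isBDSimpleSelfFinancing_holdFrom (hF : MonotoneOn F (Icc 0 T)) (ht0 : 0 ≤ t)
    (htT : t < T) {x y : Ω → ℝ} (hx : Measurable[enlarge F τ t] x)
    (hy : Measurable[enlarge F τ t] y)
    (hD : ∀ ω, ∀ v ∈ Ico 0 T, ContinuousWithinAt (D · ω) (Ioi v) v)
    (hcost : ∀ ω, x ω * exp (-(r * (T - t))) + y ω * D t ω = 0) :
    IsBDSimpleSelfFinancing P F τ D r T (holdFrom t x) (holdFrom t y) := by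
  have hG : ∀ u ∈ Icc 0 T, t ≤ u → enlarge F τ t ≤ enlarge F τ u := fun u hu htu =>
    enlarge_mono htu (hF ⟨ht0, htT.le⟩ hu htu)
  -- rebalance only at `m`: the entry time `t`, or any interior time if `t = 0`
  obtain ⟨m, hm0, hmT, htm, hm⟩ : ∃ m, 0 < m ∧ m < T ∧ t ≤ m ∧ (t = 0 ∨ t = m) := by
    rcases ht0.eq_or_lt with rfl | ht
    · exact ⟨T / 2, by linarith, by linarith, by linarith, Or.inl rfl⟩
    · exact ⟨t, ht, htT, le_rfl, Or.inr rfl⟩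
  have hG0 : t < m → enlarge F τ t ≤ enlarge F τ 0 := fun h => by
    rw [hm.resolve_right h.ne]
  have hGm := hG m ⟨hm0.le, hmT.le⟩ htm
  refine ⟨fun u hu => ⟨measurable_holdFrom hx (fun h => hG u hu h.le),
      measurable_holdFrom hy (fun h => hG u hu h.le)⟩,
    2, fun n => if n = 0 then 0 else if n = 1 then m else T,
    fun n => holdFrom t x (if n = 0 then 0 else if n = 1 then m else T),
    fun n => holdFrom t y (if n = 0 then 0 else if n = 1 then m else T),
    two_pos, rfl, rfl, fun n hn => ?_, fun n h₁ h₂ => ?_, fun n h₁ h₂ u hu => ?_,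
    fun n hn => .of_forall fun ω => ?_⟩
  · interval_cases n <;> simp [hm0, hmT]
  · interval_cases n
    · exact ⟨measurable_holdFrom hx hG0, measurable_holdFrom hy hG0⟩
    · exact ⟨measurable_holdFrom hx fun _ => hGm, measurable_holdFrom hy fun _ => hGm⟩
  · interval_cases n
    · have : t < u ↔ t < m := by
        obtain ⟨hu0, hum⟩ : 0 < u ∧ u ≤ m := by simpa using hu
        rcases hm with rfl | rfl
        · exact ⟨fun _ => hm0, fun _ => hu0⟩
        · exact ⟨fun h => (lt_irrefl _ (h.trans_le hum)).elim, fun h => (lt_irrefl _ h).elim⟩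
      simpa using ⟨holdFrom_congr x this, holdFrom_congr y this⟩
    · have : t < u ↔ t < T := by
        obtain ⟨hmu, -⟩ : m < u ∧ u ≤ T := by simpa using hu
        exact ⟨fun _ => htT, fun _ => htm.trans_lt hmu⟩
      simpa using ⟨holdFrom_congr x this, holdFrom_congr y this⟩
  · refine continuousWithinAt_BDvalue_holdFrom (hcost ω) (hD ω _ ?_)
    interval_cases n <;> simp [hm0.le, hmT, ht0.trans_lt htT]

/-- `y (D(T) - e^{r(T-t)} D(t))` is the terminal value of buying `y` units of `D` at time `t`
on the event `A`, financed by the bond. -/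
theorem NBDSA.ae_payoff_eq_zero (h : NBDSA P F τ D r T) (hF : MonotoneOn F (Icc 0 T))
    (hD : ∀ ω, ∀ v ∈ Ico 0 T, ContinuousWithinAt (D · ω) (Ioi v) v) (ht0 : 0 ≤ t)
    (htT : t < T) (hDt : Measurable[enlarge F τ t] (D t)) {A : Set Ω}
    (hA : MeasurableSet[enlarge F τ t] A) {y : Ω → ℝ} (hy : Measurable[enlarge F τ t] y)
    (hpay : ∀ ω ∈ A, 0 ≤ y ω * (D T ω - exp (r * (T - t)) * D t ω)) :
    ∀ᵐ ω ∂P, ω ∈ A → y ω * (D T ω - exp (r * (T - t)) * D t ω) = 0 := by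
  set z := A.indicator y
  set x : Ω → ℝ := fun ω => -(exp (r * (T - t)) * z ω * D t ω)
  have hz : Measurable[enlarge F τ t] z := hy.indicator hA
  have hx : Measurable[enlarge F τ t] x := ((measurable_const.mul hz).mul hDt).neg
  have hcost : ∀ ω, x ω * exp (-(r * (T - t))) + z ω * D t ω = 0 := fun ω => by
    simp only [x, exp_neg]
    field_simp
    ring
  have hpayT : ∀ ω, BDvalue r T D (holdFrom t x) (holdFrom t z) T ω =
      z ω * (D T ω - exp (r * (T - t)) * D t ω) := fun ω => by
    rw [BDvalue_holdFrom_of_lt htT, sub_self, mul_zero, neg_zero, exp_zero]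
    ring
  have hz_pay : ∀ ω, 0 ≤ z ω * (D T ω - exp (r * (T - t)) * D t ω) := fun ω => by
    by_cases hω : ω ∈ A
    · simpa [z, hω] using hpay ω hω
    · simp [z, hω]
  have hnull : P {ω | 0 < BDvalue r T D (holdFrom t x) (holdFrom t z) T ω} = 0 := by
    by_contra hpos
    exact h ⟨_, _, isBDSimpleSelfFinancing_holdFrom hF ht0 htT hx hz hD hcost,
      .of_forall fun _ => BDvalue_holdFrom_of_le ht0, .of_forall fun ω => hpayT ω ▸ hz_pay ω,
      pos_iff_ne_zero.2 hpos⟩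
  filter_upwards [measure_eq_zero_iff_ae_notMem.1 hnull] with ω hω hωA
  rw [hpayT, not_lt] at hω
  simpa [z, hωA] using le_antisymm hω (hz_pay ω)

end NoArbitrage

section Consequences

variable {Ω : Type*} [mΩ : MeasurableSpace Ω] {P : Measure Ω}
  {F : ℝ → MeasurableSpace Ω} {τ : Ω → ℝ} {D : ℝ → Ω → ℝ} {r T t : ℝ}

def CondDefaultProbPos (P : Measure Ω) (F : ℝ → MeasurableSpace Ω) (τ : Ω → ℝ) (T : ℝ) :
    Prop :=
  ∀ s t : ℝ, 0 ≤ s → s < t →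
    ∀ᵐ ω ∂P, 0 < (P[Set.indicator {ω | s < τ ω ∧ τ ω ≤ t} (fun _ => (1 : ℝ)) | F T]) ω

theorem measure_eq_zero_of_measure_inter_tau_Ioc_eq_zero [IsFiniteMeasure P]
    (hFT : F T ≤ mΩ) (hτ_meas : Measurable τ) (hτ_cond : CondDefaultProbPos P F τ T)
    {s u : ℝ} (hs : 0 ≤ s) (hsu : s < u) {A : Set Ω} (hA : MeasurableSet[F T] A)
    (h : P (A ∩ {ω | s < τ ω ∧ τ ω ≤ u}) = 0) : P A = 0 :=
  measure_eq_zero_of_measure_inter_eq_zero hFT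
    ((measurableSet_lt measurable_const hτ_meas).inter
      (measurableSet_le hτ_meas measurable_const))
    (hτ_cond s u hs hsu) hA h

theorem measure_eq_zero_of_measure_inter_lt_tau_eq_zero [IsFiniteMeasure P] (hFT : F T ≤ mΩ)
    (hT : 0 ≤ T) (hτ_meas : Measurable τ)
    (hτ_cond : CondDefaultProbPos P F τ T)
    {A : Set Ω} (hA : MeasurableSet[F T] A) (h : P (A ∩ {ω | T < τ ω}) = 0) : P A = 0 :=
  measure_eq_zero_of_measure_inter_tau_Ioc_eq_zero hFT hτ_meas hτ_cond hT (lt_add_one T) hA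
    (measure_mono_null (inter_subset_inter_right _ fun _ h => h.1) h)

theorem NBDSA.ae_eq_zero_of_tau_le (h : NBDSA P F τ D r T) (hF : MonotoneOn F (Icc 0 T))
    (hD : ∀ ω, ∀ v ∈ Ico 0 T, ContinuousWithinAt (D · ω) (Ioi v) v)
    (hD_adapted : ∀ t ∈ Icc (0 : ℝ) T, Measurable[enlarge F τ t] (D t))
    (hD_T : ∀ ω, D T ω = Set.indicator {ω' | T < τ ω'} (fun _ => (1 : ℝ)) ω)
    (ht : t ∈ Icc 0 T) : ∀ᵐ ω ∂P, τ ω ≤ t → D t ω = 0 := by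
  rcases ht.2.eq_or_lt with rfl | htT
  · exact .of_forall fun ω hω => by simp [hD_T, hω]
  have hDT : ∀ ω, τ ω ≤ t → D T ω = 0 := fun ω hω => by simp [hD_T, hω.trans htT.le]
  have hpay : ∀ ω, τ ω ≤ t →
      -D t ω * (D T ω - exp (r * (T - t)) * D t ω) = exp (r * (T - t)) * (D t ω * D t ω) :=
    fun ω hω => by rw [hDT ω hω]; ring
  filter_upwards [h.ae_payoff_eq_zero hF hD ht.1 htT (hD_adapted t ht)
    (measurableSet_enlarge_tau_le ht.1 le_rfl) (hD_adapted t ht).neg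
    fun ω hω => by
      rw [Pi.neg_apply, hpay ω hω]
      exact mul_nonneg (exp_pos _).le (mul_self_nonneg _)] with ω hω hτ
  simpa [hpay ω hτ, exp_ne_zero] using hω hτ

theorem NBDSA.ae_mem_Ioo_of_eqOn [IsFiniteMeasure P] (h : NBDSA P F τ D r T)
    (hF : MonotoneOn F (Icc 0 T)) (hFT : F T ≤ mΩ) (hτ_meas : Measurable τ)
    (hτ_cond : CondDefaultProbPos P F τ T)
    (hD : ∀ ω, ∀ v ∈ Ico 0 T, ContinuousWithinAt (D · ω) (Ioi v) v)
    (hD_T : ∀ ω, D T ω = Set.indicator {ω' | T < τ ω'} (fun _ => (1 : ℝ)) ω)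
    (ht0 : 0 ≤ t) (htT : t < T) (hDt : Measurable[enlarge F τ t] (D t)) {f : Ω → ℝ}
    (hf : Measurable[F t] f) (hDf : EqOn (D t) f {ω | t < τ ω}) :
    ∀ᵐ ω ∂P, f ω ∈ Ioo 0 (exp (-(r * (T - t)))) := by
  have hFtT : F t ≤ F T := hF ⟨ht0, htT.le⟩ ⟨ht0.trans htT.le, le_rfl⟩ htT.le
  have hDT : ∀ ω, 0 ≤ D T ω ∧ D T ω ≤ 1 := fun ω => by
    by_cases hω : T < τ ω <;> simp [hD_T, hω]
  have he : 0 < exp (r * (T - t)) := exp_pos _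
  -- buying `D` where `f ≤ 0` pays at least `D(T) ≥ 0`, and at least `1` on survival
  have hle : P {ω | f ω ≤ 0} = 0 := by
    have hA : MeasurableSet[F t] {ω | f ω ≤ 0} := hf measurableSet_Iic
    have hnull := h.ae_payoff_eq_zero hF hD ht0 htT hDt (hA.inter_lt_tau_enlarge ht0) (y := fun _ => 1)
      measurable_const fun ω hω => by
        rw [one_mul, hDf hω.2]
        nlinarith [hDT ω, mul_nonpos_of_nonneg_of_nonpos he.le hω.1]
    refine measure_eq_zero_of_measure_inter_lt_tau_eq_zero hFT (ht0.trans htT.le) hτ_meas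
      hτ_cond (hFtT _ hA) (measure_mono_null (fun ω ⟨hωA, hTω⟩ => ?_) (ae_iff.1 hnull))
    have htω : t < τ ω := htT.trans hTω
    simp only [mem_ofPred_eq, Classical.not_imp, one_mul, hDf htω, hD_T, indicator_of_mem hTω]
    exact ⟨⟨hωA, htω⟩, by nlinarith [mul_nonpos_of_nonneg_of_nonpos he.le hωA]⟩
  -- selling `D` where `f ≥ e^{-r(T-t)}` pays at least `1 - D(T) ≥ 0`, and at least `1` on
  -- default before `T`
  have hge : P {ω | exp (-(r * (T - t))) ≤ f ω} = 0 := by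
    have hA : MeasurableSet[F t] {ω | exp (-(r * (T - t))) ≤ f ω} := hf measurableSet_Ici
    have hef : ∀ ω, exp (-(r * (T - t))) ≤ f ω → 1 ≤ exp (r * (T - t)) * f ω := fun ω hω =>
      (inv_le_iff_one_le_mul₀' he).1 (by rwa [← exp_neg])
    have hnull := h.ae_payoff_eq_zero hF hD ht0 htT hDt (hA.inter_lt_tau_enlarge ht0) (y := fun _ => -1)
      measurable_const fun ω hω => by
        rw [hDf hω.2]
        linarith [hDT ω, hef ω hω.1]
    refine measure_eq_zero_of_measure_inter_tau_Ioc_eq_zero hFT hτ_meas hτ_cond ht0 htT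
      (hFtT _ hA) (measure_mono_null (fun ω ⟨hωA, htω, hωT⟩ => ?_) (ae_iff.1 hnull))
    have hDT0 : D T ω = 0 := by simp [hD_T, not_lt.2 hωT]
    simp only [mem_ofPred_eq, Classical.not_imp, hDf htω, hDT0]
    exact ⟨⟨hωA, htω⟩, by linarith [hef ω hωA]⟩
  filter_upwards [measure_eq_zero_iff_ae_notMem.1 hle, measure_eq_zero_iff_ae_notMem.1 hge]
    with ω h₁ h₂
  simp only [not_le] at h₁ h₂
  exact ⟨h₁, h₂⟩

theorem exists_continuousOn_ae_eq_of_eqOn_lt_tau [IsFiniteMeasure P] (hT : 0 < T)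
    (hF : MonotoneOn F (Icc 0 T)) (hF_le : ∀ t ∈ Set.Icc (0 : ℝ) T, F t ≤ mΩ)
    (hF_null : ∀ t ∈ Set.Icc (0 : ℝ) T, ∀ A : Set Ω,
      MeasurableSet[mΩ] A → P A = 0 → MeasurableSet[F t] A)
    (hτ_meas : Measurable τ)
    (hτ_cond : CondDefaultProbPos P F τ T)
    (hD_T : ∀ ω, D T ω = Set.indicator {ω' | T < τ ω'} (fun _ => (1 : ℝ)) ω)
    (hD_cont : ∀ ω, ContinuousOn (fun t => D t ω) (Set.Icc 0 T ∩ Set.Iio (τ ω)))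
    {f : ℝ → Ω → ℝ} (hf : ∀ t ∈ Icc 0 T, Measurable[F t] (f t))
    (hDf : ∀ t ∈ Icc 0 T, EqOn (D t) (f t) {ω | t < τ ω}) :
    ∃ c : ℝ → Ω → ℝ, (∀ t ∈ Icc 0 T, Measurable[F t] (c t)) ∧
      (∀ ω, ContinuousOn (c · ω) (Icc 0 T)) ∧ (∀ ω, c T ω = 1) ∧
      ∀ t ∈ Icc 0 T, c t =ᵐ[P] f t := by
  have hTT : T ∈ Icc 0 T := ⟨hT.le, le_rfl⟩
  have hFT : F T ≤ mΩ := hF_le T hTT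
  obtain ⟨g, hg, hg_cont, hg_eq⟩ := exists_continuousOn_modification (m := F T) hT f
    fun v hv => (hf v hv).mono (hF hv hTT hv.2) le_rfl
  have hgD : ∀ ω, T < τ ω → EqOn (g · ω) (D · ω) (Icc 0 T) := fun ω hω =>
    hg_eq ω _ ((hD_cont ω).mono fun v hv => ⟨hv, hv.2.trans_lt hω⟩)
      fun _ hq => (hDf _ hq.1 (hq.1.2.trans_lt hω)).symm
  -- the linear correction forces `c T = 1` everywhere without changing the survivors' paths
  set c : ℝ → Ω → ℝ := fun v ω => g v ω + v / T * (1 - g T ω)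
  have hc : ∀ t ∈ Icc 0 T, Measurable[F T] (c t) := fun t ht =>
    (hg t ht).add (measurable_const.mul (measurable_const.sub (hg T hTT)))
  have hcf : ∀ t ∈ Icc 0 T, c t =ᵐ[P] f t := fun t ht => by
    refine measure_eq_zero_of_measure_inter_lt_tau_eq_zero hFT hT.le hτ_meas hτ_cond
      (measurableSet_eq_fun (hc t ht) ((hf t ht).mono (hF ht hTT ht.2) le_rfl)).compl ?_
    refine measure_mono_null (fun ω ⟨hne, hω⟩ => hne ?_) measure_empty
    simp [c, hgD ω hω ht, hgD ω hω hTT, hD_T, hω, hDf t ht (ht.2.trans_lt hω)]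
  refine ⟨c, fun t ht => ?_, fun ω => (hg_cont ω).add (by fun_prop),
    fun ω => by simp [c, hT.ne'], hcf⟩
  exact measurable_of_ae_eq_of_forall_null (hF_le t ht) (hF_null t ht) (hf t ht)
    ((hc t ht).mono hFT le_rfl) (hcf t ht).symm

end Consequences

theorem stmt6_general {Ω : Type*} [mΩ : MeasurableSpace Ω] (P : Measure Ω)
    [IsProbabilityMeasure P] (T r : ℝ) (hT : 0 < T) (hr : 0 ≤ r)
    (F : ℝ → MeasurableSpace Ω)
    (hF_mono : ∀ s t : ℝ, 0 ≤ s → s ≤ t → t ≤ T → F s ≤ F t)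
    (hF_le : ∀ t ∈ Set.Icc (0 : ℝ) T, F t ≤ mΩ)
    (hF_null : ∀ t ∈ Set.Icc (0 : ℝ) T, ∀ A : Set Ω,
      MeasurableSet[mΩ] A → P A = 0 → MeasurableSet[F t] A)
    (τ : Ω → ℝ) (hτ_meas : Measurable τ)
    (hτ_cond : ∀ s t : ℝ, 0 ≤ s → s < t →
      ∀ᵐ ω ∂P, 0 < (P[Set.indicator {ω | s < τ ω ∧ τ ω ≤ t}
        (fun _ => (1 : ℝ)) | F T]) ω)
    (D : ℝ → Ω → ℝ)
    (hD_adapted : ∀ t ∈ Set.Icc (0 : ℝ) T, Measurable[enlarge F τ t] (D t))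
    (hD_T : ∀ ω, D T ω = Set.indicator {ω' | T < τ ω'} (fun _ => (1 : ℝ)) ω)
    (hD_cont : ∀ ω, ContinuousOn (fun t => D t ω) (Set.Icc 0 T ∩ Set.Iio (τ ω)))
    (hD_rc : ∀ ω, ∀ t ∈ Set.Icc (0 : ℝ) T, τ ω ≤ t →
      ContinuousWithinAt (fun t => D t ω) (Set.Ici t) t)
    (hNBDSA : NBDSA P F τ D r T) :
    ∃ c : ℝ → Ω → ℝ,
      (∀ t ∈ Set.Icc (0 : ℝ) T, Measurable[F t] (c t)) ∧
      (∀ ω, ContinuousOn (fun t => c t ω) (Set.Icc (0 : ℝ) T)) ∧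
      (∀ t : ℝ, 0 ≤ t → t < T → ∀ᵐ ω ∂P, c t ω ∈ Set.Ioo (0 : ℝ) 1) ∧
      (∀ ω, c T ω = 1) ∧
      (∀ t ∈ Set.Icc (0 : ℝ) T, ∀ᵐ ω ∂P,
        D t ω = Set.indicator {ω' | t < τ ω'} (c t) ω) := by
  have hF : MonotoneOn F (Icc 0 T) := fun s hs u hu hsu => hF_mono s u hs.1 hsu hu.2
  have hD : ∀ ω, ∀ v ∈ Ico 0 T, ContinuousWithinAt (D · ω) (Ioi v) v := fun ω v hv =>
    continuousWithinAt_Ioi_of_continuousOn_Iio (hD_cont ω) (hD_rc ω) hv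
  choose! f hf hDf using fun t (ht : t ∈ Icc 0 T) =>
    exists_measurable_eqOn_of_measurable_enlarge (hD_adapted t ht)
  obtain ⟨c, hc, hc_cont, hcT, hcf⟩ := exists_continuousOn_ae_eq_of_eqOn_lt_tau hT hF hF_le
    hF_null hτ_meas hτ_cond hD_T hD_cont hf hDf
  refine ⟨c, hc, hc_cont, fun t ht0 htT => ?_, hcT, fun t ht => ?_⟩
  · have ht : t ∈ Icc 0 T := ⟨ht0, htT.le⟩
    filter_upwards [hcf t ht, hNBDSA.ae_mem_Ioo_of_eqOn hF (hF_le T ⟨hT.le, le_rfl⟩) hτ_meas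
      hτ_cond hD hD_T ht0 htT (hD_adapted t ht) (hf t ht) (hDf t ht)] with ω hcω hfω
    rw [hcω]
    exact ⟨hfω.1, hfω.2.trans_le
      (exp_le_one_iff.2 (neg_nonpos.2 (mul_nonneg hr (sub_nonneg.2 htT.le))))⟩
  · filter_upwards [hcf t ht, hNBDSA.ae_eq_zero_of_tau_le hF hD hD_adapted hD_T ht]
      with ω hcω hDω
    by_cases hτ : t < τ ω
    · simp [hτ, hcω, hDf t ht hτ]
    · simp [hτ, hDω (not_lt.1 hτ)]

/-- Suppose the NBDSA principle holds.  Then there exists an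
`(F_t)_{t∈[0,T]}`-adapted process `c` with all paths continuous such that
`c(t) ∈ (0,1)` a.s. for every `t ∈ [0,T)`, `c(T) = 1`, and for every `t ∈ [0,T]`,
`D(t,T) = c(t)·1_{{t<τ}}` `P`-a.s. -/
theorem stmt6 {Ω : Type*} [mΩ : MeasurableSpace Ω] (P : Measure Ω)
    [IsProbabilityMeasure P] (T r : ℝ) (hT : 0 < T) (hr : 0 ≤ r)
    (F : ℝ → MeasurableSpace Ω)
    (hF_mono : ∀ s t : ℝ, 0 ≤ s → s ≤ t → t ≤ T → F s ≤ F t)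
    (hF_le : ∀ t ∈ Set.Icc (0 : ℝ) T, F t ≤ mΩ)
    (hF_null : ∀ t ∈ Set.Icc (0 : ℝ) T, ∀ A : Set Ω,
      MeasurableSet[mΩ] A → P A = 0 → MeasurableSet[F t] A)
    (τ : Ω → ℝ) (hτ_pos : ∀ ω, 0 < τ ω) (hτ_meas : Measurable τ)
    (hτ_cond : ∀ s t : ℝ, 0 ≤ s → s < t →
      ∀ᵐ ω ∂P, 0 < (P[Set.indicator {ω | s < τ ω ∧ τ ω ≤ t}
        (fun _ => (1 : ℝ)) | F T]) ω)
    (D : ℝ → Ω → ℝ)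
    (hD_adapted : ∀ t ∈ Set.Icc (0 : ℝ) T, Measurable[enlarge F τ t] (D t))
    (hD_T : ∀ ω, D T ω = Set.indicator {ω' | T < τ ω'} (fun _ => (1 : ℝ)) ω)
    (hD_cont : ∀ ω, ContinuousOn (fun t => D t ω) (Set.Icc 0 T ∩ Set.Iio (τ ω)))
    (hD_rc : ∀ ω, ∀ t ∈ Set.Icc (0 : ℝ) T, τ ω ≤ t →
      ContinuousWithinAt (fun t => D t ω) (Set.Ici t) t)
    (hNBDSA : NBDSA P F τ D r T) :
    ∃ c : ℝ → Ω → ℝ,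
      (∀ t ∈ Set.Icc (0 : ℝ) T, Measurable[F t] (c t)) ∧
      (∀ ω, ContinuousOn (fun t => c t ω) (Set.Icc (0 : ℝ) T)) ∧
      (∀ t : ℝ, 0 ≤ t → t < T → ∀ᵐ ω ∂P, c t ω ∈ Set.Ioo (0 : ℝ) 1) ∧
      (∀ ω, c T ω = 1) ∧
      (∀ t ∈ Set.Icc (0 : ℝ) T, ∀ᵐ ω ∂P,
        D t ω = Set.indicator {ω' | t < τ ω'} (c t) ω) :=
  stmt6_general (mΩ := mΩ) P T r hT hr F hF_mono hF_le hF_null τ hτ_meas hτ_cond D hD_adapted hD_T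
    hD_cont hD_rc hNBDSA
end

section
/- There exists a unique measure Q̃ on the σ-algebra σ(𝒜̃) generated by 𝒜̃ such that for every cylindrical set A_{z,Z} and all 0 ≤ s < t ≤ T: Q̃(A_{z,Z} × (s,t]) = E_{Q_BS}[1_{{W ∈ A_{z,Z}}}·(G(s) − G(t))] and Q̃(A_{z,Z} × (T,∞)) = E_{Q_BS}[1_{{W ∈ A_{z,Z}}}·G(T)]; moreover Q̃ is a probability measure. Equivalently, the additive set function defined by these formulas on the algebra 𝒜̃ is countably additive on 𝒜̃. -/
/-! For fixed `ω`, feed an independent uniform level `u ∈ (0,1)` into the path `G(·, ω)` and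
let `τ(ω, u)` be the time at which `G(·, ω)` falls below `u` (beyond `T` if it stays above `u`
on `[0, T]`). Monotonicity and continuity give `s < τ ≤ t ↔ G(t) ≤ u < G(s)`, so by Fubini the
image of `Q_BS ⊗ Leb(0,1)` under `(ω, u) ↦ (W ω, τ(ω, u))` takes the prescribed values on the
basic sets. The basic sets form a π-system generating `σ(𝒜̃)`, and two of them cover the whole
space, so the prescribed values determine the measure. -/

open MeasureTheory

/-- Borel σ-algebra on the one-point compactification `Ṙ` of `ℝ`. -/
instance : MeasurableSpace (OnePoint ℝ) := borel _

/-- The path space `Ṙ^{[0,T]}`. -/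
abbrev PathSp (T : ℝ) := Set.Icc (0 : ℝ) T → OnePoint ℝ

/-- The space `Ω̃ := Ṙ^{[0,T]} × (0,∞)`. -/
abbrev OmegaTilde (T : ℝ) := PathSp T × {x : ℝ // 0 < x}

/-- The cylindrical set `A_{z,Z} := {x ∈ Ṙ^{[0,T]} : (x(z₁),…,x(zₙ)) ∈ Z}`. -/
def Cyl (T : ℝ) (n : ℕ) (z : Fin n → Set.Icc (0 : ℝ) T)
    (Z : Set (Fin n → OnePoint ℝ)) : Set (PathSp T) :=
  {x | (fun i => x (z i)) ∈ Z}

/-- `C` is a cylindrical set determined by a Borel set `Z ⊆ Ṙⁿ`. -/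
def IsCylSet (T : ℝ) (C : Set (PathSp T)) : Prop :=
  ∃ (n : ℕ) (z : Fin n → Set.Icc (0 : ℝ) T) (Z : Set (Fin n → OnePoint ℝ)),
    MeasurableSet Z ∧ C = Cyl T n z Z

/-- The basic sets `A_{z,Z} × (s,t]` (with `0 ≤ s < t ≤ T`) and `A_{z,Z} × (T,∞)`. -/
def IsBasicSet (T : ℝ) (A : Set (OmegaTilde T)) : Prop :=
  ∃ C : Set (PathSp T), IsCylSet T C ∧
    ((∃ s t : ℝ, 0 ≤ s ∧ s < t ∧ t ≤ T ∧
        A = {p : OmegaTilde T | p.1 ∈ C ∧ s < (p.2 : ℝ) ∧ (p.2 : ℝ) ≤ t}) ∨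
      A = {p : OmegaTilde T | p.1 ∈ C ∧ T < (p.2 : ℝ)})

/-- The algebra `𝒜̃` of finite unions of disjoint basic sets. -/
def AlgTilde (T : ℝ) : Set (Set (OmegaTilde T)) :=
  {A | ∃ (m : ℕ) (B : Fin m → Set (OmegaTilde T)), (∀ i, IsBasicSet T (B i)) ∧
    Pairwise (Function.onFun Disjoint B) ∧ A = ⋃ i, B i}

/-- The defining formulas for the measure `Q̃` on `σ(𝒜̃)`:
`Q̃(A_{z,Z} × (s,t]) = E_{Q_BS}[1_{{W ∈ A_{z,Z}}}·(G(s) − G(t))]` and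
`Q̃(A_{z,Z} × (T,∞)) = E_{Q_BS}[1_{{W ∈ A_{z,Z}}}·G(T)]`. -/
def SatisfiesFormulas {Ω : Type*} [MeasurableSpace Ω] (Q_BS : Measure Ω) (T : ℝ)
    (W : Ω → PathSp T) (G : ℝ → Ω → ℝ)
    (Qt : @Measure (OmegaTilde T) (MeasurableSpace.generateFrom (AlgTilde T))) : Prop :=
  (∀ (n : ℕ) (z : Fin n → Set.Icc (0 : ℝ) T) (Z : Set (Fin n → OnePoint ℝ)),
    MeasurableSet Z → ∀ s t : ℝ, 0 ≤ s → s < t → t ≤ T →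
      Qt {p : OmegaTilde T | p.1 ∈ Cyl T n z Z ∧ s < (p.2 : ℝ) ∧ (p.2 : ℝ) ≤ t} =
        ENNReal.ofReal (∫ ω in {ω | W ω ∈ Cyl T n z Z}, (G s ω - G t ω) ∂Q_BS)) ∧
  (∀ (n : ℕ) (z : Fin n → Set.Icc (0 : ℝ) T) (Z : Set (Fin n → OnePoint ℝ)),
    MeasurableSet Z →
      Qt {p : OmegaTilde T | p.1 ∈ Cyl T n z Z ∧ T < (p.2 : ℝ)} =
        ENNReal.ofReal (∫ ω in {ω | W ω ∈ Cyl T n z Z}, G T ω ∂Q_BS))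

open Set Filter Topology

section LevelTime

variable {T : ℝ} {g : ℝ → ℝ}

-- The branch `g 0 ≤ u` only concerns levels outside `(0, 1)`; it keeps the time positive.
noncomputable def levelTime (T : ℝ) (g : ℝ → ℝ) (u : ℝ) : ℝ :=
  if u < g T ∨ g 0 ≤ u then T + 1 else sSup {r ∈ Icc 0 T | u < g r}

theorem lt_levelTime_iff (hanti : AntitoneOn g (Icc 0 T)) (hcont : ContinuousOn g (Icc 0 T))
    {s u : ℝ} (hs : s ∈ Icc 0 T) : s < levelTime T g u ↔ u < g s ∨ g 0 ≤ u := by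
  have hT_mem : T ∈ Icc 0 T := ⟨hs.1.trans hs.2, le_rfl⟩
  unfold levelTime
  split_ifs with h
  · refine iff_of_true (by linarith [hs.2]) (h.imp_left fun hu => hu.trans_le ?_)
    exact hanti hs hT_mem hs.2
  push Not at h
  rw [or_iff_left h.2.not_ge]
  have hbdd : BddAbove {r ∈ Icc 0 T | u < g r} := ⟨T, fun r hr => hr.1.2⟩
  constructor
  · intro hlt
    have hne : {r ∈ Icc 0 T | u < g r}.Nonempty := by
      by_contra hempty
      rw [not_nonempty_iff_eq_empty.1 hempty, Real.sSup_empty] at hlt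
      exact hlt.not_ge hs.1
    obtain ⟨r, hr, hsr⟩ := exists_lt_of_lt_csSup hne hlt
    exact hr.2.trans_le (hanti hs hr.1 hsr.le)
  · intro hus
    have hsT : s < T := hs.2.lt_of_ne (by rintro rfl; exact h.1.not_gt hus)
    -- continuity of `g` at `s` pushes the level `u` slightly to the right of `s`
    have hnear : ∀ᶠ r in 𝓝[>] s, r ∈ Icc 0 T ∧ u < g r := by
      have hIoc : Ioc s T ∈ 𝓝[>] s := Ioc_mem_nhdsGT hsT
      have hg : ContinuousWithinAt g (Ioc s T) s :=
        (hcont s hs).mono fun r hr => ⟨hs.1.trans hr.1.le, hr.2⟩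
      rw [ContinuousWithinAt, nhdsWithin_Ioc_eq_nhdsGT hsT] at hg
      filter_upwards [hIoc, hg.eventually (lt_mem_nhds hus)] with r hr hur
      exact ⟨⟨hs.1.trans hr.1.le, hr.2⟩, hur⟩
    obtain ⟨r, hr, hsr⟩ := (hnear.and self_mem_nhdsWithin).exists
    exact hsr.trans_le (le_csSup hbdd hr)

theorem levelTime_pos (hanti : AntitoneOn g (Icc 0 T)) (hcont : ContinuousOn g (Icc 0 T))
    (hT : 0 ≤ T) (u : ℝ) : 0 < levelTime T g u :=
  (lt_levelTime_iff hanti hcont ⟨le_rfl, hT⟩).2 (lt_or_ge u (g 0))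

theorem levelTime_mem_Ioc_iff (hanti : AntitoneOn g (Icc 0 T))
    (hcont : ContinuousOn g (Icc 0 T)) {s t u : ℝ} (hs : 0 ≤ s) (hst : s ≤ t) (ht : t ≤ T) :
    levelTime T g u ∈ Ioc s t ↔ u ∈ Ico (g t) (g s) := by
  have hs' : s ∈ Icc 0 T := ⟨hs, hst.trans ht⟩
  have ht' : t ∈ Icc 0 T := ⟨hs.trans hst, ht⟩
  have hgs0 : g s ≤ g 0 := hanti ⟨le_rfl, hs.trans hs'.2⟩ hs' hs
  rw [mem_Ioc, mem_Ico, ← not_lt, lt_levelTime_iff hanti hcont hs',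
    lt_levelTime_iff hanti hcont ht']
  constructor
  · rintro ⟨hu | hu, hut⟩ <;> push Not at hut
    · exact ⟨hut.1, hu⟩
    · exact absurd hu hut.2.not_ge
  · rintro ⟨hgu, hus⟩
    exact ⟨Or.inl hus, by push Not; exact ⟨hgu, hus.trans_le hgs0⟩⟩

end LevelTime

section Generation

variable {T : ℝ}

theorem IsCylSet.inter {C₁ C₂ : Set (PathSp T)} (h₁ : IsCylSet T C₁) (h₂ : IsCylSet T C₂) :
    IsCylSet T (C₁ ∩ C₂) := by
  obtain ⟨n₁, z₁, Z₁, hZ₁, rfl⟩ := h₁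
  obtain ⟨n₂, z₂, Z₂, hZ₂, rfl⟩ := h₂
  have hleft : Measurable fun v : Fin (n₁ + n₂) → OnePoint ℝ => fun i => v (Fin.castAdd n₂ i) :=
    measurable_pi_lambda _ fun i => measurable_pi_apply _
  have hright : Measurable fun v : Fin (n₁ + n₂) → OnePoint ℝ => fun i => v (Fin.natAdd n₁ i) :=
    measurable_pi_lambda _ fun i => measurable_pi_apply _
  refine ⟨n₁ + n₂, Fin.append z₁ z₂, _ ⁻¹' Z₁ ∩ _ ⁻¹' Z₂, (hleft hZ₁).inter (hright hZ₂), ?_⟩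
  ext x
  simp only [Cyl, mem_inter_iff, mem_ofPred_eq, mem_preimage, Fin.append_left, Fin.append_right]

theorem isPiSystem_isBasicSet : IsPiSystem {A : Set (OmegaTilde T) | IsBasicSet T A} := by
  rintro A₁ ⟨C₁, hC₁, h₁⟩ A₂ ⟨C₂, hC₂, h₂⟩ ⟨p, hp₁, hp₂⟩
  refine ⟨C₁ ∩ C₂, hC₁.inter hC₂, ?_⟩
  rcases h₁ with ⟨s₁, t₁, hs₁, -, ht₁, rfl⟩ | rfl <;>
    rcases h₂ with ⟨s₂, t₂, -, -, ht₂, rfl⟩ | rfl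
  · refine Or.inl ⟨max s₁ s₂, min t₁ t₂, le_max_of_le_left hs₁,
      (max_lt hp₁.2.1 hp₂.2.1).trans_le (le_min hp₁.2.2 hp₂.2.2), (min_le_left _ _).trans ht₁, ?_⟩
    ext q
    simp only [mem_inter_iff, mem_ofPred_eq, max_lt_iff, le_min_iff]
    tauto
  · exact absurd (hp₁.2.2.trans ht₁) hp₂.2.not_ge
  · exact absurd (hp₂.2.2.trans ht₂) hp₁.2.not_ge
  · refine Or.inr ?_
    ext q
    simp only [mem_inter_iff, mem_ofPred_eq]
    tauto

theorem IsBasicSet.mem_algTilde {A : Set (OmegaTilde T)} (hA : IsBasicSet T A) :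
    A ∈ AlgTilde T :=
  ⟨1, fun _ => A, fun _ => hA, fun i j hij => absurd (Subsingleton.elim i j) hij,
    (iUnion_const A).symm⟩

theorem generateFrom_algTilde :
    MeasurableSpace.generateFrom (AlgTilde T) =
      MeasurableSpace.generateFrom {A : Set (OmegaTilde T) | IsBasicSet T A} := by
  refine le_antisymm (MeasurableSpace.generateFrom_le ?_)
    (MeasurableSpace.generateFrom_mono fun A hA => hA.mem_algTilde)
  rintro A ⟨m, B, hB, -, rfl⟩
  exact .iUnion fun i => MeasurableSpace.measurableSet_generateFrom (hB i)

theorem measurable_generateFrom_algTilde {α : Type*} [MeasurableSpace α] {f : α → OmegaTilde T}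
    (hf : ∀ A, IsBasicSet T A → MeasurableSet (f ⁻¹' A)) :
    Measurable[_, MeasurableSpace.generateFrom (AlgTilde T)] f := by
  rw [generateFrom_algTilde]
  exact measurable_generateFrom hf

theorem univ_eq_union_isBasicSet :
    (univ : Set (OmegaTilde T)) =
      {p | p.1 ∈ Cyl T 0 Fin.elim0 univ ∧ 0 < (p.2 : ℝ) ∧ (p.2 : ℝ) ≤ T} ∪
        {p | p.1 ∈ Cyl T 0 Fin.elim0 univ ∧ T < (p.2 : ℝ)} := by
  ext p
  simpa [Cyl, p.2.2] using le_or_gt (p.2 : ℝ) T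

end Generation

theorem MeasureTheory.Measure.prod_apply_fst_mem_snd_mem {α β : Type*} [MeasurableSpace α]
    [MeasurableSpace β] (μ : Measure α) (ν : Measure β) [SFinite ν] {M : Set α}
    {I : α → Set β} (hM : MeasurableSet M)
    (hMI : MeasurableSet {q : α × β | q.1 ∈ M ∧ q.2 ∈ I q.1}) :
    μ.prod ν {q | q.1 ∈ M ∧ q.2 ∈ I q.1} = ∫⁻ x in M, ν (I x) ∂μ := by
  rw [Measure.prod_apply hMI, ← lintegral_indicator hM]
  congr 1 with x
  by_cases hx : x ∈ M <;> simp [hx]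

theorem volume_restrict_Ioo_Ico {a b : ℝ} (ha : 0 < a) (hb : b ≤ 1) :
    volume.restrict (Ioo 0 1) (Ico a b) = ENNReal.ofReal (b - a) := by
  rw [Measure.restrict_apply measurableSet_Ico, inter_eq_left.2, Real.volume_Ico]
  exact fun u hu => ⟨ha.trans_le hu.1, hu.2.trans_le hb⟩

theorem volume_restrict_Ioo_lt_or_ge {a : ℝ} (ha : a ≤ 1) :
    volume.restrict (Ioo 0 1) {u | u < a ∨ 1 ≤ u} = ENNReal.ofReal a := by
  have hinter : {u : ℝ | u < a ∨ 1 ≤ u} ∩ Ioo 0 1 = Ioo 0 a := by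
    ext u
    simp only [mem_inter_iff, mem_ofPred_eq, mem_Ioo]
    constructor
    · rintro ⟨hu | hu, hu0, hu1⟩
      · exact ⟨hu0, hu⟩
      · exact absurd hu hu1.not_ge
    · rintro ⟨hu0, hua⟩
      exact ⟨Or.inl hua, hu0, hua.trans_le ha⟩
  rw [Measure.restrict_apply' measurableSet_Ioo, hinter, Real.volume_Ioo, sub_zero]

theorem measurableSet_fst_mem_snd_lt_or_ge {α : Type*} [MeasurableSpace α] {M : Set α}
    {f g : α → ℝ} (hM : MeasurableSet M) (hf : Measurable f) (hg : Measurable g) :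
    MeasurableSet {q : α × ℝ | q.1 ∈ M ∧ q.2 ∈ {u | u < f q.1 ∨ g q.1 ≤ u}} :=
  (measurable_fst hM).inter ((measurableSet_lt measurable_snd (hf.comp measurable_fst)).union
    (measurableSet_le (hg.comp measurable_fst) measurable_snd))

section Construction

variable {Ω : Type*} {T : ℝ} {W : Ω → PathSp T} {G : ℝ → Ω → ℝ}

noncomputable def timeChange (W : Ω → PathSp T) (G : ℝ → Ω → ℝ)
    (hpos : ∀ ω u, 0 < levelTime T (fun r => G r ω) u) (q : Ω × ℝ) : OmegaTilde T :=
  (W q.1, ⟨levelTime T (fun r => G r q.1) q.2, hpos q.1 q.2⟩)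

variable (hpos : ∀ ω u, 0 < levelTime T (fun r => G r ω) u)

theorem timeChange_preimage_Ioc (hanti : ∀ ω, AntitoneOn (fun t => G t ω) (Icc 0 T))
    (hcont : ∀ ω, ContinuousOn (fun t => G t ω) (Icc 0 T)) (C : Set (PathSp T)) {s t : ℝ}
    (hs : 0 ≤ s) (hst : s ≤ t) (ht : t ≤ T) :
    timeChange W G hpos ⁻¹' {p | p.1 ∈ C ∧ s < (p.2 : ℝ) ∧ (p.2 : ℝ) ≤ t} =
      {q | q.1 ∈ W ⁻¹' C ∧ q.2 ∈ Ico (G t q.1) (G s q.1)} := by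
  ext q
  exact and_congr_right' (levelTime_mem_Ioc_iff (hanti q.1) (hcont q.1) hs hst ht)

theorem timeChange_preimage_Ioi (hanti : ∀ ω, AntitoneOn (fun t => G t ω) (Icc 0 T))
    (hcont : ∀ ω, ContinuousOn (fun t => G t ω) (Icc 0 T)) (hT : 0 ≤ T) (C : Set (PathSp T)) :
    timeChange W G hpos ⁻¹' {p | p.1 ∈ C ∧ T < (p.2 : ℝ)} =
      {q | q.1 ∈ W ⁻¹' C ∧ q.2 ∈ {u | u < G T q.1 ∨ G 0 q.1 ≤ u}} := by
  ext q
  exact and_congr_right' (lt_levelTime_iff (hanti q.1) (hcont q.1) ⟨hT, le_rfl⟩)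

variable [MeasurableSpace Ω]

theorem measurableSet_preimage_cyl (hW : ∀ z, Measurable fun ω => W ω z) {C : Set (PathSp T)}
    (hC : IsCylSet T C) : MeasurableSet (W ⁻¹' C) := by
  obtain ⟨n, z, Z, hZ, rfl⟩ := hC
  exact (measurable_pi_lambda _ fun i => hW (z i)) hZ

theorem measurable_timeChange (hT : 0 ≤ T) (hW : ∀ z, Measurable fun ω => W ω z)
    (hG_meas : ∀ t ∈ Icc 0 T, Measurable (G t))
    (hanti : ∀ ω, AntitoneOn (fun t => G t ω) (Icc 0 T))
    (hcont : ∀ ω, ContinuousOn (fun t => G t ω) (Icc 0 T)) :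
    Measurable[_, MeasurableSpace.generateFrom (AlgTilde T)] (timeChange W G hpos) := by
  refine measurable_generateFrom_algTilde ?_
  rintro A ⟨C, hC, ⟨s, t, hs, hst, ht, rfl⟩ | rfl⟩
  · rw [timeChange_preimage_Ioc hpos hanti hcont C hs hst.le ht]
    exact measurableSet_region_between_co (hG_meas t ⟨hs.trans hst.le, ht⟩)
      (hG_meas s ⟨hs, hst.le.trans ht⟩) (measurableSet_preimage_cyl hW hC)
  · rw [timeChange_preimage_Ioi hpos hanti hcont hT C]
    exact measurableSet_fst_mem_snd_lt_or_ge (measurableSet_preimage_cyl hW hC)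
      (hG_meas T ⟨hT, le_rfl⟩) (hG_meas 0 ⟨le_rfl, hT⟩)

end Construction

section Formulas

variable {Ω : Type*} [MeasurableSpace Ω] {T : ℝ} {W : Ω → PathSp T} {G : ℝ → Ω → ℝ}

theorem integrable_of_mem_Ioc_zero_one (Q : Measure Ω) [IsFiniteMeasure Q] {f : Ω → ℝ}
    (hf : Measurable f) (hf_mem : ∀ ω, f ω ∈ Ioc 0 1) : Integrable f Q :=
  .of_mem_Icc 0 1 hf.aemeasurable (ae_of_all _ fun ω => Ioc_subset_Icc_self (hf_mem ω))

theorem map_timeChange_apply_Ioc (Q : Measure Ω) [IsFiniteMeasure Q] (hT : 0 ≤ T)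
    (hW : ∀ z, Measurable fun ω => W ω z) (hG_mem : ∀ t ∈ Icc 0 T, ∀ ω, G t ω ∈ Ioc 0 1)
    (hanti : ∀ ω, AntitoneOn (fun t => G t ω) (Icc 0 T))
    (hcont : ∀ ω, ContinuousOn (fun t => G t ω) (Icc 0 T))
    (hG_meas : ∀ t ∈ Icc 0 T, Measurable (G t))
    (hpos : ∀ ω u, 0 < levelTime T (fun r => G r ω) u) {n : ℕ}
    (z : Fin n → Icc (0 : ℝ) T) {Z : Set (Fin n → OnePoint ℝ)} (hZ : MeasurableSet Z)
    {s t : ℝ} (hs : 0 ≤ s) (hst : s < t) (ht : t ≤ T) :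
    @Measure.map _ _ _ (MeasurableSpace.generateFrom (AlgTilde T)) (timeChange W G hpos)
        (Q.prod (volume.restrict (Ioo 0 1)))
        {p : OmegaTilde T | p.1 ∈ Cyl T n z Z ∧ s < (p.2 : ℝ) ∧ (p.2 : ℝ) ≤ t} =
      ENNReal.ofReal (∫ ω in {ω | W ω ∈ Cyl T n z Z}, (G s ω - G t ω) ∂Q) := by
  have hs' : s ∈ Icc 0 T := ⟨hs, hst.le.trans ht⟩
  have ht' : t ∈ Icc 0 T := ⟨hs.trans hst.le, ht⟩
  have hC : IsCylSet T (Cyl T n z Z) := ⟨n, z, Z, hZ, rfl⟩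
  have hA : IsBasicSet T {p : OmegaTilde T | p.1 ∈ Cyl T n z Z ∧ s < (p.2 : ℝ) ∧ (p.2 : ℝ) ≤ t} :=
    ⟨_, hC, Or.inl ⟨s, t, hs, hst, ht, rfl⟩⟩
  have hM := measurableSet_preimage_cyl hW hC
  have hint : Integrable (fun ω => G s ω - G t ω) Q :=
    (integrable_of_mem_Ioc_zero_one Q (hG_meas s hs') (hG_mem s hs')).sub
      (integrable_of_mem_Ioc_zero_one Q (hG_meas t ht') (hG_mem t ht'))
  rw [Measure.map_apply (measurable_timeChange hpos hT hW hG_meas hanti hcont)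
      (MeasurableSpace.measurableSet_generateFrom hA.mem_algTilde),
    show {ω | W ω ∈ Cyl T n z Z} = W ⁻¹' Cyl T n z Z from rfl,
    timeChange_preimage_Ioc hpos hanti hcont _ hs hst.le ht,
    Measure.prod_apply_fst_mem_snd_mem _ _ (I := fun ω => Ico (G t ω) (G s ω)) hM
      (measurableSet_region_between_co (hG_meas t ht') (hG_meas s hs') hM),
    ofReal_integral_eq_lintegral_ofReal hint.restrict
      (ae_of_all _ fun ω => sub_nonneg.2 (hanti ω hs' ht' hst.le))]
  exact setLIntegral_congr_fun hM fun ω _ =>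
    volume_restrict_Ioo_Ico (hG_mem t ht' ω).1 (hG_mem s hs' ω).2

theorem map_timeChange_apply_Ioi (Q : Measure Ω) [IsFiniteMeasure Q] (hT : 0 ≤ T)
    (hW : ∀ z, Measurable fun ω => W ω z) (hG_mem : ∀ t ∈ Icc 0 T, ∀ ω, G t ω ∈ Ioc 0 1)
    (hG_zero : ∀ ω, G 0 ω = 1) (hanti : ∀ ω, AntitoneOn (fun t => G t ω) (Icc 0 T))
    (hcont : ∀ ω, ContinuousOn (fun t => G t ω) (Icc 0 T))
    (hG_meas : ∀ t ∈ Icc 0 T, Measurable (G t))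
    (hpos : ∀ ω u, 0 < levelTime T (fun r => G r ω) u) {n : ℕ}
    (z : Fin n → Icc (0 : ℝ) T) {Z : Set (Fin n → OnePoint ℝ)} (hZ : MeasurableSet Z) :
    @Measure.map _ _ _ (MeasurableSpace.generateFrom (AlgTilde T)) (timeChange W G hpos)
        (Q.prod (volume.restrict (Ioo 0 1)))
        {p : OmegaTilde T | p.1 ∈ Cyl T n z Z ∧ T < (p.2 : ℝ)} =
      ENNReal.ofReal (∫ ω in {ω | W ω ∈ Cyl T n z Z}, G T ω ∂Q) := by
  have hT' : T ∈ Icc 0 T := ⟨hT, le_rfl⟩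
  have hC : IsCylSet T (Cyl T n z Z) := ⟨n, z, Z, hZ, rfl⟩
  have hA : IsBasicSet T {p : OmegaTilde T | p.1 ∈ Cyl T n z Z ∧ T < (p.2 : ℝ)} :=
    ⟨_, hC, Or.inr rfl⟩
  have hM := measurableSet_preimage_cyl hW hC
  rw [Measure.map_apply (measurable_timeChange hpos hT hW hG_meas hanti hcont)
      (MeasurableSpace.measurableSet_generateFrom hA.mem_algTilde),
    show {ω | W ω ∈ Cyl T n z Z} = W ⁻¹' Cyl T n z Z from rfl,
    timeChange_preimage_Ioi hpos hanti hcont hT,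
    Measure.prod_apply_fst_mem_snd_mem _ _ (I := fun ω => {u | u < G T ω ∨ G 0 ω ≤ u}) hM
      (measurableSet_fst_mem_snd_lt_or_ge hM (hG_meas T hT') (hG_meas 0 ⟨le_rfl, hT⟩)),
    ofReal_integral_eq_lintegral_ofReal
      (integrable_of_mem_Ioc_zero_one Q (hG_meas T hT') (hG_mem T hT')).restrict
      (ae_of_all _ fun ω => (hG_mem T hT' ω).1.le)]
  refine setLIntegral_congr_fun hM fun ω _ => ?_
  rw [hG_zero]
  exact volume_restrict_Ioo_lt_or_ge (hG_mem T hT' ω).2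

end Formulas

section Uniqueness

variable {Ω : Type*} [MeasurableSpace Ω] {Q : Measure Ω} {T : ℝ} {W : Ω → PathSp T}
  {G : ℝ → Ω → ℝ}

theorem SatisfiesFormulas.measure_univ_eq (hT : 0 < T)
    {Qt Qt' : @Measure (OmegaTilde T) (MeasurableSpace.generateFrom (AlgTilde T))}
    (h : SatisfiesFormulas Q T W G Qt) (h' : SatisfiesFormulas Q T W G Qt') :
    Qt univ = Qt' univ := by
  let _ := MeasurableSpace.generateFrom (AlgTilde T)
  have hB : IsBasicSet T {p : OmegaTilde T | p.1 ∈ Cyl T 0 Fin.elim0 univ ∧ T < (p.2 : ℝ)} :=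
    ⟨_, ⟨0, Fin.elim0, univ, .univ, rfl⟩, Or.inr rfl⟩
  have hdisj : Disjoint
      {p : OmegaTilde T | p.1 ∈ Cyl T 0 Fin.elim0 univ ∧ 0 < (p.2 : ℝ) ∧ (p.2 : ℝ) ≤ T}
      {p : OmegaTilde T | p.1 ∈ Cyl T 0 Fin.elim0 univ ∧ T < (p.2 : ℝ)} :=
    disjoint_left.2 fun p hp₁ hp₂ => hp₁.2.2.not_gt hp₂.2
  have hmeas := MeasurableSpace.measurableSet_generateFrom hB.mem_algTilde
  rw [univ_eq_union_isBasicSet, measure_union hdisj hmeas, measure_union hdisj hmeas,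
    h.1 0 Fin.elim0 univ .univ 0 T le_rfl hT le_rfl, h.2 0 Fin.elim0 univ .univ,
    h'.1 0 Fin.elim0 univ .univ 0 T le_rfl hT le_rfl, h'.2 0 Fin.elim0 univ .univ]

theorem SatisfiesFormulas.unique (hT : 0 < T)
    {Qt Qt' : @Measure (OmegaTilde T) (MeasurableSpace.generateFrom (AlgTilde T))}
    [@IsFiniteMeasure _ (MeasurableSpace.generateFrom (AlgTilde T)) Qt]
    (h : SatisfiesFormulas Q T W G Qt) (h' : SatisfiesFormulas Q T W G Qt') : Qt = Qt' := by
  refine ext_of_generate_finite _ generateFrom_algTilde isPiSystem_isBasicSet ?_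
    (h.measure_univ_eq hT h')
  rintro A ⟨C, ⟨n, z, Z, hZ, rfl⟩, ⟨s, t, hs, hst, ht, rfl⟩ | rfl⟩
  · rw [h.1 n z Z hZ s t hs hst ht, h'.1 n z Z hZ s t hs hst ht]
  · rw [h.2 n z Z hZ, h'.2 n z Z hZ]

end Uniqueness

/-- There exists a unique measure `Q̃` on the σ-algebra `σ(𝒜̃)` generated by
the algebra `𝒜̃` such that for every cylindrical set `A_{z,Z}` and all `0 ≤ s < t ≤ T`:
`Q̃(A_{z,Z} × (s,t]) = E_{Q_BS}[1_{{W ∈ A_{z,Z}}}·(G(s) − G(t))]` and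
`Q̃(A_{z,Z} × (T,∞)) = E_{Q_BS}[1_{{W ∈ A_{z,Z}}}·G(T)]`; moreover `Q̃` is a probability
measure. -/
theorem stmt7 {Ω : Type*} [mΩ : MeasurableSpace Ω] (Q_BS : Measure Ω)
    [IsProbabilityMeasure Q_BS] (T : ℝ) (hT : 0 < T)
    (W : Ω → PathSp T) (hW : ∀ z : Set.Icc (0 : ℝ) T, Measurable fun ω => W ω z)
    (G : ℝ → Ω → ℝ)
    (hG_mem : ∀ t ∈ Set.Icc (0 : ℝ) T, ∀ ω, G t ω ∈ Set.Ioc (0 : ℝ) 1)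
    (hG_zero : ∀ ω, G 0 ω = 1)
    (hG_anti : ∀ ω, AntitoneOn (fun t => G t ω) (Set.Icc (0 : ℝ) T))
    (hG_cont : ∀ ω, ContinuousOn (fun t => G t ω) (Set.Icc (0 : ℝ) T))
    (hG_meas : ∀ t ∈ Set.Icc (0 : ℝ) T, Measurable (G t)) :
    ∃ Qt : @Measure (OmegaTilde T) (MeasurableSpace.generateFrom (AlgTilde T)),
      SatisfiesFormulas Q_BS T W G Qt ∧
      @IsProbabilityMeasure (OmegaTilde T)
        (MeasurableSpace.generateFrom (AlgTilde T)) Qt ∧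
      ∀ Qt' : @Measure (OmegaTilde T) (MeasurableSpace.generateFrom (AlgTilde T)),
        SatisfiesFormulas Q_BS T W G Qt' → Qt' = Qt := by
  let _ := MeasurableSpace.generateFrom (AlgTilde T)
  have hpos : ∀ ω u, 0 < levelTime T (fun r => G r ω) u := fun ω =>
    levelTime_pos (hG_anti ω) (hG_cont ω) hT.le
  have hQt : SatisfiesFormulas Q_BS T W G (Measure.map (timeChange W G hpos)
      (Q_BS.prod (volume.restrict (Ioo 0 1)))) :=
    ⟨fun n z Z hZ s t hs hst ht => map_timeChange_apply_Ioc Q_BS hT.le hW hG_mem hG_anti hG_cont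
        hG_meas hpos z hZ hs hst ht,
      fun n z Z hZ => map_timeChange_apply_Ioi Q_BS hT.le hW hG_mem hG_zero hG_anti hG_cont
        hG_meas hpos z hZ⟩
  have : IsProbabilityMeasure (volume.restrict (Ioo (0 : ℝ) 1)) := ⟨by simp⟩
  refine ⟨_, hQt, Measure.isProbabilityMeasure_map ?_, fun Qt' hQt' => (hQt.unique hT hQt').symm⟩
  exact (measurable_timeChange hpos hT.le hW hG_meas hG_anti hG_cont).aemeasurable
end

section
/- Let Q̃ be the measure on σ(𝒜̃) satisfying Q̃(A_{z,Z} × (s,t]) = E_{Q_BS}[1_{{W ∈ A_{z,Z}}}·(G(s) − G(t))] for all cylindrical sets A_{z,Z} and 0 ≤ s < t ≤ T and Q̃(A_{z,Z} × (T,∞)) = E_{Q_BS}[1_{{W ∈ A_{z,Z}}}·G(T)]. Then for every A ∈ 𝒜̃ such that {ω ∈ Ω : (W(ω), τ(ω)) ∈ A} = ∅, one has Q̃(A) = 0. -/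
open MeasureTheory

/-- Let `Q̃` be the measure on `σ(𝒜̃)` satisfying
`Q̃(A_{z,Z} × (s,t]) = E_{Q_BS}[1_{{W ∈ A_{z,Z}}}·(G(s) − G(t))]` and
`Q̃(A_{z,Z} × (T,∞)) = E_{Q_BS}[1_{{W ∈ A_{z,Z}}}·G(T)]`.  Then for every `A ∈ 𝒜̃` such
that `{ω ∈ Ω : (W(ω), τ(ω)) ∈ A} = ∅`, one has `Q̃(A) = 0`. -/
theorem stmt8 {Ω : Type*} (mF : MeasurableSpace Ω) [mΩ : MeasurableSpace Ω] (P : Measure Ω)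
    [IsProbabilityMeasure P] (T : ℝ) (hT : 0 < T)
    (hmF_le : mF ≤ mΩ)
    (Q_BS : @Measure Ω mF) (hQBS : @IsProbabilityMeasure Ω mF Q_BS)
    (hQBS_equiv : ∀ A : Set Ω, MeasurableSet[mF] A → (Q_BS A = 0 ↔ P A = 0))
    (W : Ω → PathSp T)
    (hW : ∀ z : Set.Icc (0 : ℝ) T, Measurable[mF] fun ω => W ω z)
    (G : ℝ → Ω → ℝ)
    (hG_mem : ∀ t ∈ Set.Icc (0 : ℝ) T, ∀ ω, G t ω ∈ Set.Ioc (0 : ℝ) 1)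
    (hG_zero : ∀ ω, G 0 ω = 1)
    (hG_anti : ∀ ω, AntitoneOn (fun t => G t ω) (Set.Icc (0 : ℝ) T))
    (hG_cont : ∀ ω, ContinuousOn (fun t => G t ω) (Set.Icc (0 : ℝ) T))
    (hG_meas : ∀ t ∈ Set.Icc (0 : ℝ) T, Measurable[mF] (G t))
    (τ : Ω → {x : ℝ // 0 < x}) (hτ_meas : Measurable fun ω => (τ ω : ℝ))
    (hτ_cond : ∀ s t : ℝ, 0 ≤ s → s < t →
      ∀ᵐ ω ∂P, 0 < (P[Set.indicator {ω | s < (τ ω : ℝ) ∧ (τ ω : ℝ) ≤ t}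
        (fun _ => (1 : ℝ)) | mF]) ω)
    (Qt : @Measure (OmegaTilde T) (MeasurableSpace.generateFrom (AlgTilde T)))
    (hQt : @SatisfiesFormulas Ω mF Q_BS T W G Qt) :
    ∀ A ∈ AlgTilde T, {ω | (W ω, τ ω) ∈ A} = ∅ → Qt A = 0 := by
  -- Key: if S is mF-measurable and disjoint from some {s < τ ≤ t}, then Q_BS S = 0.
  have key : ∀ S : Set Ω, MeasurableSet[mF] S →
      (∃ s t : ℝ, 0 ≤ s ∧ s < t ∧ S ∩ {ω | s < (τ ω : ℝ) ∧ (τ ω : ℝ) ≤ t} = ∅) →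
      Q_BS S = 0 := by
    rintro S hS ⟨s, t, hs, hst, hempty⟩
    rw [hQBS_equiv S hS]
    by_contra hP
    letI : MeasurableSpace Ω := mΩ
    set E : Set Ω := {ω | s < (τ ω : ℝ) ∧ (τ ω : ℝ) ≤ t} with hEdef
    have hE : MeasurableSet E :=
      ((measurableSet_lt measurable_const hτ_meas).inter
        (measurableSet_le hτ_meas measurable_const))
    have hind : Integrable (Set.indicator E (fun _ => (1 : ℝ))) P :=
      (integrable_const (1 : ℝ)).indicator hE
    set f := P[Set.indicator E (fun _ => (1 : ℝ)) | mF] with hfdef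
    have hint0 : ∫ ω in S, f ω ∂P = 0 := by
      rw [hfdef, setIntegral_condExp hmF_le hind hS,
        setIntegral_indicator hE, hempty]
      simp
    have hf_pos : ∀ᵐ ω ∂P, 0 < f ω := hτ_cond s t hs hst
    have hf_nonneg : 0 ≤ᵐ[P] f := hf_pos.mono fun ω h => le_of_lt h
    have hIntOn : IntegrableOn f S P := integrable_condExp.integrableOn
    have hsupp : 0 < P (Function.support f ∩ S) := by
      have hnull : P {ω | ¬ 0 < f ω} = 0 := hf_pos
      have hsub : S ⊆ (Function.support f ∩ S) ∪ {ω | ¬ 0 < f ω} := by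
        intro ω hω
        by_cases h0 : 0 < f ω
        · exact Or.inl ⟨ne_of_gt h0, hω⟩
        · exact Or.inr h0
      have hle : P S ≤ P (Function.support f ∩ S) + P {ω | ¬ 0 < f ω} :=
        le_trans (measure_mono hsub) (measure_union_le _ _)
      rw [hnull, add_zero] at hle
      exact lt_of_lt_of_le (by exact pos_iff_ne_zero.mpr hP) hle
    have hpos : 0 < ∫ ω in S, f ω ∂P :=
      (setIntegral_pos_iff_support_of_nonneg_ae (ae_restrict_of_ae hf_nonneg)
        hIntOn).mpr hsupp
    rw [hint0] at hpos
    exact lt_irrefl 0 hpos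
  rintro A ⟨m, B, hB, _hdisj, rfl⟩ hAempty
  have hBempty : ∀ i, {ω | (W ω, τ ω) ∈ B i} = ∅ := by
    intro i
    apply Set.eq_empty_of_subset_empty
    rw [← hAempty]
    intro ω h
    exact Set.mem_iUnion.2 ⟨i, h⟩
  have hBzero : ∀ i, Qt (B i) = 0 := by
    intro i
    obtain ⟨C, ⟨n, z, Z, hZ, rfl⟩, hcase⟩ := hB i
    have hSmeas : MeasurableSet[mF] {ω | W ω ∈ Cyl T n z Z} := by
      have hm : Measurable[mF] fun ω => (fun j => W ω (z j)) :=
        by letI : MeasurableSpace Ω := mF; exact measurable_pi_lambda _ fun j => hW (z j)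
      exact hm hZ
    have hzero : ∀ g : Ω → ℝ,
        Q_BS {ω | W ω ∈ Cyl T n z Z} = 0 →
        ENNReal.ofReal (∫ ω in {ω | W ω ∈ Cyl T n z Z}, g ω ∂Q_BS) = 0 := by
      intro g h
      rw [Measure.restrict_eq_zero.mpr h, integral_zero_measure, ENNReal.ofReal_zero]
    rcases hcase with ⟨s, t, hs, hst, htT, hBi⟩ | hBi
    · rw [hBi, hQt.1 n z Z hZ s t hs hst htT]
      apply hzero
      apply key _ hSmeas
      refine ⟨s, t, hs, hst, ?_⟩
      rw [Set.eq_empty_iff_forall_notMem]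
      intro ω hω
      have hmem : ω ∈ ({ω | (W ω, τ ω) ∈ B i} : Set Ω) := by
        rw [hBi]; exact ⟨hω.1, hω.2.1, hω.2.2⟩
      rw [hBempty i] at hmem
      exact hmem
    · rw [hBi, hQt.2 n z Z hZ]
      apply hzero
      apply key _ hSmeas
      refine ⟨T, T + 1, le_of_lt hT, by linarith, ?_⟩
      rw [Set.eq_empty_iff_forall_notMem]
      intro ω hω
      have hmem : ω ∈ ({ω | (W ω, τ ω) ∈ B i} : Set Ω) := by
        rw [hBi]; exact ⟨hω.1, hω.2.1⟩
      rw [hBempty i] at hmem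
      exact hmem
  have hle : Qt (⋃ i, B i) ≤ ∑' i, Qt (B i) := measure_iUnion_le B
  simp only [hBzero, tsum_zero] at hle
  exact le_antisymm hle zero_le
end

section
/- The family 𝒦 is a compact class: for every sequence (K_n)_{n≥1} of sets in 𝒦 with ⋂_{n=1}^∞ K_n = ∅ there exists N such that ⋂_{n=1}^N K_n = ∅. -/
/-- `L_{u,U} := {(x,t) ∈ E × (0,T] : (x(u₁),…,x(u_l),t) ∈ U}` for a compact set
`U ⊆ ℝ^l × (0,T]`. -/
def Lset (T : ℝ) (l : ℕ) (u : Fin l → Set.Icc (0 : ℝ) T)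
    (U : Set ((Fin l → ℝ) × ℝ)) : Set (OmegaTilde T) :=
  {p | ∃ y : Fin l → ℝ, (∀ i, p.1 (u i) = (y i : OnePoint ℝ)) ∧ (y, (p.2 : ℝ)) ∈ U}

/-- `M_{v,V} := {x ∈ E : (x(v₁),…,x(v_m)) ∈ V}` for a compact set `V ⊆ ℝ^m`. -/
def Mset (T : ℝ) (m : ℕ) (v : Fin m → Set.Icc (0 : ℝ) T)
    (V : Set (Fin m → ℝ)) : Set (PathSp T) :=
  {x | ∃ y : Fin m → ℝ, (∀ i, x (v i) = (y i : OnePoint ℝ)) ∧ y ∈ V}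

/-- The class `𝒦` of all sets of the form `L_{u,U} ∪ (M_{v,V} × (T,∞))`. -/
def KClass (T : ℝ) : Set (Set (OmegaTilde T)) :=
  {K | ∃ (l m : ℕ), 0 < l ∧ 0 < m ∧
    ∃ (u : Fin l → Set.Icc (0 : ℝ) T) (v : Fin m → Set.Icc (0 : ℝ) T)
      (U : Set ((Fin l → ℝ) × ℝ)) (V : Set (Fin m → ℝ)),
      IsCompact U ∧ U ⊆ {q | 0 < q.2 ∧ q.2 ≤ T} ∧ IsCompact V ∧
      K = Lset T l u U ∪ {p : OmegaTilde T | p.1 ∈ Mset T m v V ∧ T < (p.2 : ℝ)}}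

lemma mset_isClosed {T : ℝ} {m : ℕ} (v : Fin m → Set.Icc (0:ℝ) T) {V : Set (Fin m → ℝ)}
    (hV : IsCompact V) : IsClosed (Mset T m v V) := by
  have hg : Continuous (fun y : Fin m → ℝ => fun i => ((y i : OnePoint ℝ))) :=
    continuous_pi fun i => OnePoint.continuous_coe.comp (continuous_apply i)
  have himg : IsClosed ((fun y : Fin m → ℝ => fun i => ((y i : OnePoint ℝ))) '' V) :=
    (hV.image hg).isClosed
  have heq : Mset T m v V
      = (fun x : PathSp T => fun i => x (v i)) ⁻¹'
        ((fun y : Fin m → ℝ => fun i => ((y i : OnePoint ℝ))) '' V) := by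
    ext x
    simp only [Mset, Set.mem_setOf_eq, Set.mem_preimage, Set.mem_image]
    constructor
    · rintro ⟨y, h1, h2⟩; exact ⟨y, h2, by funext i; exact (h1 i).symm⟩
    · rintro ⟨y, h2, h1⟩; exact ⟨y, fun i => (congrFun h1 i).symm, h2⟩
  rw [heq]
  exact himg.preimage (continuous_pi fun i => continuous_apply _)

lemma lset_isClosed {T : ℝ} {l : ℕ} (u : Fin l → Set.Icc (0:ℝ) T)
    {U : Set ((Fin l → ℝ) × ℝ)} (hU : IsCompact U) : IsClosed (Lset T l u U) := by
  have hg : Continuous (fun q : (Fin l → ℝ) × ℝ =>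
      ((fun i => ((q.1 i : OnePoint ℝ)), q.2) : (Fin l → OnePoint ℝ) × ℝ)) := by
    refine Continuous.prodMk ?_ continuous_snd
    exact continuous_pi fun i =>
      OnePoint.continuous_coe.comp ((continuous_apply i).comp continuous_fst)
  have himg : IsClosed ((fun q : (Fin l → ℝ) × ℝ =>
      ((fun i => ((q.1 i : OnePoint ℝ)), q.2) : (Fin l → OnePoint ℝ) × ℝ)) '' U) :=
    (hU.image hg).isClosed
  have hf : Continuous (fun p : OmegaTilde T =>
      ((fun i => p.1 (u i), (p.2 : ℝ)) : (Fin l → OnePoint ℝ) × ℝ)) := by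
    refine Continuous.prodMk ?_ (continuous_subtype_val.comp continuous_snd)
    exact continuous_pi fun i => (continuous_apply (u i)).comp continuous_fst
  have heq : Lset T l u U = (fun p : OmegaTilde T =>
      ((fun i => p.1 (u i), (p.2 : ℝ)) : (Fin l → OnePoint ℝ) × ℝ)) ⁻¹'
      ((fun q : (Fin l → ℝ) × ℝ =>
      ((fun i => ((q.1 i : OnePoint ℝ)), q.2) : (Fin l → OnePoint ℝ) × ℝ)) '' U) := by
    ext p
    simp only [Lset, Set.mem_setOf_eq, Set.mem_preimage, Set.mem_image]
    constructor
    · rintro ⟨y, h1, h2⟩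
      exact ⟨(y, (p.2 : ℝ)), h2, Prod.ext (funext fun i => (h1 i).symm) rfl⟩
    · rintro ⟨⟨y, t⟩, h2, h1⟩
      have hy := congrArg Prod.fst h1
      have ht : t = (p.2 : ℝ) := congrArg Prod.snd h1
      refine ⟨y, fun i => (congrFun hy i).symm, ?_⟩
      rwa [← ht]
  rw [heq]
  exact himg.preimage hf

lemma lset_isCompact {T : ℝ} {l : ℕ} (u : Fin l → Set.Icc (0:ℝ) T)
    {U : Set ((Fin l → ℝ) × ℝ)} (hU : IsCompact U)
    (hUsub : U ⊆ {q | 0 < q.2 ∧ q.2 ≤ T}) : IsCompact (Lset T l u U) := by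
  -- The second coordinates of `Lset` lie in a compact subset of `(0,∞)`.
  set C : Set ℝ := Prod.snd '' U with hC
  have hCc : IsCompact C := hU.image continuous_snd
  have hCsub : C ⊆ Set.range (Subtype.val : {x : ℝ // 0 < x} → ℝ) := by
    rintro t ⟨q, hq, rfl⟩
    exact ⟨⟨q.2, (hUsub hq).1⟩, rfl⟩
  have hS : IsCompact ((Subtype.val : {x : ℝ // 0 < x} → ℝ) ⁻¹' C) := by
    rw [Topology.IsEmbedding.isCompact_iff Topology.IsEmbedding.subtypeVal]
    rwa [Set.image_preimage_eq_of_subset hCsub]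
  have hsub : Lset T l u U ⊆
      (Set.univ : Set (PathSp T)) ×ˢ ((Subtype.val : {x : ℝ // 0 < x} → ℝ) ⁻¹' C) := by
    rintro ⟨x, t⟩ ⟨y, h1, h2⟩
    exact ⟨trivial, ⟨(y, (t:ℝ)), h2, rfl⟩⟩
  exact (isCompact_univ.prod hS).of_isClosed_subset (lset_isClosed u hU) hsub

/-- The family `𝒦` is a compact class: for every sequence
`(K_n)_{n≥1}` of sets in `𝒦` with `⋂_{n=1}^∞ K_n = ∅` there exists `N` such that
`⋂_{n=1}^N K_n = ∅`. -/
theorem stmt10 (T : ℝ) (hT : 0 < T) (K : ℕ → Set (OmegaTilde T))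
    (hK : ∀ n, K n ∈ KClass T) (hInter : (⋂ n, K n) = ∅) :
    ∃ N : ℕ, (⋂ n ≤ N, K n) = ∅ := by
  choose l m hl hm u v U V hUc hUsub hVc hKeq using hK
  set Lf : ℕ → Set (OmegaTilde T) := fun n => Lset T (l n) (u n) (U n) with hLf
  set Mf : ℕ → Set (PathSp T) := fun n => Mset T (m n) (v n) (V n) with hMf
  have hLc : ∀ n, IsCompact (Lf n) := fun n => lset_isCompact (u n) (hUc n) (hUsub n)
  have hLcl : ∀ n, IsClosed (Lf n) := fun n => lset_isClosed (u n) (hUc n)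
  have hMcl : ∀ n, IsClosed (Mf n) := fun n => mset_isClosed (v n) (hVc n)
  have hMc : ∀ n, IsCompact (Mf n) := fun n => (hMcl n).isCompact
  -- p ∈ Lf n implies p.2 ≤ T
  have hLle : ∀ n (p : OmegaTilde T), p ∈ Lf n → (p.2 : ℝ) ≤ T := by
    rintro n p ⟨y, -, h2⟩
    exact (hUsub n h2).2
  have hnotin : ∀ p : OmegaTilde T, p ∉ ⋂ n, K n := by
    intro p hp; rw [hInter] at hp; exact hp
  -- Intersection of the M-parts is empty.
  have hMempty : (Mf 0 ∩ ⋂ n, Mf n) = ∅ := by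
    rw [Set.eq_empty_iff_forall_notMem]
    intro x hx
    refine hnotin (x, ⟨T + 1, by linarith⟩) (Set.mem_iInter.2 fun n => ?_)
    rw [hKeq n]
    exact Or.inr ⟨Set.mem_iInter.1 hx.2 n, by norm_num⟩
  obtain ⟨s₁, hs₁⟩ := (hMc 0).elim_finite_subfamily_closed Mf hMcl hMempty
  -- Intersection of the L-parts is empty.
  have hLempty : (Lf 0 ∩ ⋂ n, Lf n) = ∅ := by
    rw [Set.eq_empty_iff_forall_notMem]
    intro p hp
    refine hnotin p (Set.mem_iInter.2 fun n => ?_)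
    rw [hKeq n]
    exact Or.inl (Set.mem_iInter.1 hp.2 n)
  obtain ⟨s₂, hs₂⟩ := (hLc 0).elim_finite_subfamily_closed Lf hLcl hLempty
  refine ⟨(s₁ ∪ s₂).sup id, ?_⟩
  rw [Set.eq_empty_iff_forall_notMem]
  intro p hp
  have hpK : ∀ n, n ≤ (s₁ ∪ s₂).sup id → p ∈ K n := by
    intro n hn
    exact Set.mem_iInter.1 (Set.mem_iInter.1 hp n) hn
  by_cases ht : (p.2 : ℝ) ≤ T
  · -- then p lies in every L-part
    have hpL : ∀ n, n ≤ (s₁ ∪ s₂).sup id → p ∈ Lf n := by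
      intro n hn
      have := hpK n hn
      rw [hKeq n] at this
      rcases this with h | h
      · exact h
      · exact absurd h.2 (not_lt.2 ht)
    have : p ∈ Lf 0 ∩ ⋂ n ∈ s₂, Lf n := by
      refine ⟨hpL 0 (Nat.zero_le _), Set.mem_iInter₂.2 fun n hn => ?_⟩
      exact hpL n (Finset.le_sup (f := id) (Finset.mem_union_right _ hn))
    rw [hs₂] at this
    exact this
  · -- then p.1 lies in every M-part
    push_neg at ht
    have hpM : ∀ n, n ≤ (s₁ ∪ s₂).sup id → p.1 ∈ Mf n := by
      intro n hn
      have := hpK n hn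
      rw [hKeq n] at this
      rcases this with h | h
      · exact absurd (hLle n p h) (not_le.2 ht)
      · exact h.1
    have : p.1 ∈ Mf 0 ∩ ⋂ n ∈ s₁, Mf n := by
      refine ⟨hpM 0 (Nat.zero_le _), Set.mem_iInter₂.2 fun n hn => ?_⟩
      exact hpM n (Finset.le_sup (f := id) (Finset.mem_union_left _ hn))
    rw [hs₁] at this
    exact this
end

section
/- Suppose 0 < c_t ≤ 1 a.s., c_s > 0 a.s., 0 < G_t ≤ G_s ≤ 1 a.s., and E_Q[c_t·G_t | 𝒢] = c_s·G_s a.s. Then c_s < E_Q[c_t | 𝒢] a.s. if and only if E_Q[G_t | 𝒢] < G_s a.s. -/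
open MeasureTheory

lemma aux_zero_on {Ω : Type*} {mΩ : MeasurableSpace Ω} {Q : Measure Ω}
    [IsProbabilityMeasure Q] {𝒢 : MeasurableSpace Ω} (h𝒢 : 𝒢 ≤ mΩ)
    {f : Ω → ℝ} (hf : Integrable f Q) (hf0 : 0 ≤ᵐ[Q] f)
    {A : Set Ω} (hA : MeasurableSet[𝒢] A)
    (hcond : Q[f|𝒢] =ᵐ[Q.restrict A] 0) :
    f =ᵐ[Q.restrict A] 0 := by
  have hint : ∫ ω in A, f ω ∂Q = 0 := by
    rw [← setIntegral_condExp h𝒢 hf hA]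
    exact integral_eq_zero_of_ae hcond
  have hfi : Integrable f (Q.restrict A) := hf.restrict
  have h0 : (0 : Ω → ℝ) ≤ᵐ[Q.restrict A] f := ae_restrict_of_ae hf0
  exact (integral_eq_zero_iff_of_nonneg_ae h0 hfi).mp hint

/-- Let `(Ω, Σ, Q)` be a probability space and `𝒢 ⊆ Σ` a sub-σ-algebra.
Let `cs, Gs` be `𝒢`-measurable random variables and `ct, Gt` be `Σ`-measurable random
variables. Suppose `0 < ct ≤ 1` a.s., `cs > 0` a.s., `0 < Gt ≤ Gs ≤ 1` a.s., and
`E_Q[ct·Gt | 𝒢] = cs·Gs` a.s. Then `cs < E_Q[ct | 𝒢]` a.s. if and only if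
`E_Q[Gt | 𝒢] < Gs` a.s. -/
theorem stmt13 {Ω : Type*} {𝒢 : MeasurableSpace Ω} {mΩ : MeasurableSpace Ω} {Q : Measure Ω}
    [IsProbabilityMeasure Q] (h𝒢 : 𝒢 ≤ mΩ)
    (cs Gs ct Gt : Ω → ℝ)
    (hcs_meas : Measurable[𝒢] cs) (hGs_meas : Measurable[𝒢] Gs)
    (hct_meas : Measurable ct) (hGt_meas : Measurable Gt)
    (hct : ∀ᵐ ω ∂Q, 0 < ct ω ∧ ct ω ≤ 1)
    (hcs : ∀ᵐ ω ∂Q, 0 < cs ω)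
    (hG : ∀ᵐ ω ∂Q, 0 < Gt ω ∧ Gt ω ≤ Gs ω ∧ Gs ω ≤ 1)
    (hmart : Q[fun ω => ct ω * Gt ω | 𝒢] =ᵐ[Q] fun ω => cs ω * Gs ω) :
    (∀ᵐ ω ∂Q, cs ω < (Q[ct | 𝒢]) ω) ↔ (∀ᵐ ω ∂Q, (Q[Gt | 𝒢]) ω < Gs ω) := by
  have hGs_m : Measurable[mΩ] Gs := hGs_meas.mono h𝒢 le_rfl
  have hct_m : Measurable[mΩ] ct := hct_meas
  have hGt_m : Measurable[mΩ] Gt := hGt_meas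
  -- positivity of Gs
  have hGs_pos : ∀ᵐ ω ∂Q, 0 < Gs ω := by
    filter_upwards [hG] with ω h using lt_of_lt_of_le h.1 h.2.1
  -- integrability
  have hct_int : Integrable ct Q := by
    refine (integrable_const (1:ℝ)).mono' hct_m.aestronglyMeasurable ?_
    filter_upwards [hct] with ω h
    rw [Real.norm_eq_abs, abs_of_pos h.1]; exact h.2
  have hGt_int : Integrable Gt Q := by
    refine (integrable_const (1:ℝ)).mono' hGt_m.aestronglyMeasurable ?_
    filter_upwards [hG] with ω h
    rw [Real.norm_eq_abs, abs_of_pos h.1]; exact h.2.1.trans h.2.2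
  have hGs_int : Integrable Gs Q := by
    refine (integrable_const (1:ℝ)).mono' hGs_m.aestronglyMeasurable ?_
    filter_upwards [hG, hGs_pos] with ω h hp
    rw [Real.norm_eq_abs, abs_of_pos hp]; exact h.2.2
  have hctGt_int : Integrable (fun ω => ct ω * Gt ω) Q := by
    refine (integrable_const (1:ℝ)).mono'
      (hct_m.mul hGt_m).aestronglyMeasurable ?_
    filter_upwards [hct, hG] with ω h1 h2
    rw [Real.norm_eq_abs, abs_of_pos (mul_pos h1.1 h2.1)]
    exact mul_le_one₀ h1.2 h2.1.le (h2.2.1.trans h2.2.2)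
  have hGsct_int : Integrable (Gs * ct) Q := by
    refine (integrable_const (1:ℝ)).mono'
      (hGs_m.mul hct_m).aestronglyMeasurable ?_
    filter_upwards [hct, hG, hGs_pos] with ω h1 h2 hp
    rw [Pi.mul_apply, Real.norm_eq_abs, abs_of_pos (mul_pos hp h1.1)]
    exact mul_le_one₀ h2.2.2 h1.1.le h1.2
  -- pull-out property
  have hpull : Q[Gs * ct|𝒢] =ᵐ[Q] Gs * Q[ct|𝒢] :=
    condExp_mul_of_stronglyMeasurable_left hGs_meas.stronglyMeasurable hGsct_int hct_int
  -- condexp of Gs is Gs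
  have hGs_ce : Q[Gs|𝒢] = Gs :=
    condExp_of_stronglyMeasurable h𝒢 hGs_meas.stronglyMeasurable hGs_int
  -- weak inequality 1: E[Gt|𝒢] ≤ Gs a.e.
  have hle_G : ∀ᵐ ω ∂Q, (Q[Gt|𝒢]) ω ≤ Gs ω := by
    have := condExp_mono (μ := Q) (m := 𝒢) hGt_int hGs_int
      (by filter_upwards [hG] with ω h using h.2.1)
    filter_upwards [this] with ω h
    rwa [hGs_ce] at h
  -- weak inequality 2: cs ≤ E[ct|𝒢] a.e.
  have hle_c : ∀ᵐ ω ∂Q, cs ω ≤ (Q[ct|𝒢]) ω := by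
    have hptle : ∀ᵐ ω ∂Q, ct ω * Gt ω ≤ (Gs * ct) ω := by
      filter_upwards [hct, hG] with ω h1 h2
      rw [Pi.mul_apply, mul_comm (Gs ω)]
      exact mul_le_mul_of_nonneg_left h2.2.1 h1.1.le
    have hmono := condExp_mono (μ := Q) (m := 𝒢) hctGt_int hGsct_int hptle
    filter_upwards [hmono, hmart, hpull, hGs_pos] with ω h1 h2 h3 hp
    have : cs ω * Gs ω ≤ Gs ω * (Q[ct|𝒢]) ω := by
      rw [Pi.mul_apply] at h3
      rw [← h2, ← h3]; exact h1
    rw [mul_comm (cs ω) (Gs ω)] at this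
    exact le_of_mul_le_mul_left this hp
  -- measurability of condexps
  have hceGt_m : Measurable[𝒢] (Q[Gt|𝒢]) := stronglyMeasurable_condExp.measurable
  have hcect_m : Measurable[𝒢] (Q[ct|𝒢]) := stronglyMeasurable_condExp.measurable
  constructor
  · -- forward
    intro hlt
    set A : Set Ω := {ω | (Q[Gt|𝒢]) ω = Gs ω} with hA_def
    have hA : MeasurableSet[𝒢] A := measurableSet_eq_fun hceGt_m hGs_meas
    have hA' : MeasurableSet[mΩ] A := h𝒢 _ hA
    -- Gt = Gs a.e. on A
    have hcond : Q[Gs - Gt|𝒢] =ᵐ[Q.restrict A] 0 := by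
      have h1 : Q[Gs - Gt|𝒢] =ᵐ[Q] fun ω => Gs ω - (Q[Gt|𝒢]) ω := by
        filter_upwards [condExp_sub (μ := Q) (m := 𝒢) hGs_int hGt_int] with ω h
        rw [h, Pi.sub_apply, hGs_ce]
      filter_upwards [ae_restrict_of_ae h1, ae_restrict_mem hA'] with ω h hmem
      rw [h, Pi.zero_apply]
      have : (Q[Gt|𝒢]) ω = Gs ω := hmem
      linarith
    have hGtGs : ∀ᵐ ω ∂Q, ω ∈ A → Gt ω = Gs ω := by
      have hnn : (0 : Ω → ℝ) ≤ᵐ[Q] Gs - Gt := by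
        filter_upwards [hG] with ω h
        simpa using sub_nonneg.mpr h.2.1
      have h0 := aux_zero_on h𝒢 (hGs_int.sub hGt_int) hnn hA hcond
      have h1 := (ae_restrict_iff' hA').mp h0
      filter_upwards [h1] with ω h hmem
      have h2 := h hmem
      simp only [Pi.sub_apply, Pi.zero_apply] at h2
      linarith
    -- indicator trick
    have hind : A.indicator (fun ω => ct ω * Gt ω) =ᵐ[Q] A.indicator (Gs * ct) := by
      filter_upwards [hGtGs] with ω h
      by_cases hmem : ω ∈ A
      · rw [Set.indicator_of_mem hmem, Set.indicator_of_mem hmem, Pi.mul_apply,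
          h hmem, mul_comm]
      · rw [Set.indicator_of_notMem hmem, Set.indicator_of_notMem hmem]
    have hce_ind : A.indicator (Q[fun ω => ct ω * Gt ω|𝒢]) =ᵐ[Q]
        A.indicator (Q[Gs * ct|𝒢]) := by
      have h1 := condExp_indicator (μ := Q) (m := 𝒢) hctGt_int hA
      have h2 := condExp_indicator (μ := Q) (m := 𝒢) hGsct_int hA
      have h3 := condExp_congr_ae (m := 𝒢) hind
      exact h1.symm.trans (h3.trans h2)
    -- so on A, cs = E[ct|𝒢]
    have heq_on : ∀ᵐ ω ∂Q, ω ∈ A → cs ω = (Q[ct|𝒢]) ω := by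
      filter_upwards [hce_ind, hmart, hpull, hGs_pos] with ω h1 h2 h3 hp hmem
      rw [Set.indicator_of_mem hmem, Set.indicator_of_mem hmem, h2, h3,
        Pi.mul_apply] at h1
      have := mul_left_cancel₀ (ne_of_gt hp) (by linarith [h1] : Gs ω * cs ω = Gs ω * (Q[ct|𝒢]) ω)
      exact this
    have hQA : Q A = 0 := by
      rw [measure_eq_zero_iff_ae_notMem]
      filter_upwards [heq_on, hlt] with ω h1 h2 hmem
      exact absurd (h1 hmem) (ne_of_lt h2)
    have hnmem : ∀ᵐ ω ∂Q, ω ∉ A := measure_eq_zero_iff_ae_notMem.mp hQA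
    filter_upwards [hle_G, hnmem] with ω h1 h2
    exact lt_of_le_of_ne h1 h2
  · -- reverse
    intro hlt
    set B : Set Ω := {ω | cs ω = (Q[ct|𝒢]) ω} with hB_def
    have hB : MeasurableSet[𝒢] B := measurableSet_eq_fun hcs_meas hcect_m
    have hB' : MeasurableSet[mΩ] B := h𝒢 _ hB
    have hcond : Q[Gs * ct - fun ω => ct ω * Gt ω|𝒢] =ᵐ[Q.restrict B] 0 := by
      have h1 : Q[Gs * ct - fun ω => ct ω * Gt ω|𝒢] =ᵐ[Q]
          fun ω => Gs ω * (Q[ct|𝒢]) ω - cs ω * Gs ω := by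
        filter_upwards [condExp_sub (μ := Q) (m := 𝒢) hGsct_int hctGt_int,
          hmart, hpull] with ω h h2 h3
        rw [h, Pi.sub_apply, h2, h3, Pi.mul_apply]
      filter_upwards [ae_restrict_of_ae h1, ae_restrict_mem hB'] with ω h hmem
      rw [h, Pi.zero_apply]
      have : cs ω = (Q[ct|𝒢]) ω := hmem
      rw [this]; ring
    have hGtGs : ∀ᵐ ω ∂Q, ω ∈ B → Gt ω = Gs ω := by
      have hnn : (0 : Ω → ℝ) ≤ᵐ[Q] Gs * ct - fun ω => ct ω * Gt ω := by
        filter_upwards [hct, hG] with ω h1 h2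
        simp only [Pi.sub_apply, Pi.mul_apply, Pi.zero_apply]
        nlinarith [h1.1, h2.2.1]
      have h0 := aux_zero_on h𝒢 (hGsct_int.sub hctGt_int) hnn hB hcond
      have h4 := (ae_restrict_iff' hB').mp h0
      filter_upwards [h4, hct] with ω h hc hmem
      have hz := h hmem
      simp only [Pi.sub_apply, Pi.mul_apply, Pi.zero_apply] at hz
      have : ct ω * (Gs ω - Gt ω) = 0 := by linarith
      rcases mul_eq_zero.mp this with h' | h'
      · exact absurd h' (ne_of_gt hc.1)
      · linarith
    have hind : B.indicator Gt =ᵐ[Q] B.indicator Gs := by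
      filter_upwards [hGtGs] with ω h
      by_cases hmem : ω ∈ B
      · rw [Set.indicator_of_mem hmem, Set.indicator_of_mem hmem, h hmem]
      · rw [Set.indicator_of_notMem hmem, Set.indicator_of_notMem hmem]
    have hce_ind : B.indicator (Q[Gt|𝒢]) =ᵐ[Q] B.indicator Gs := by
      have h1 := condExp_indicator (μ := Q) (m := 𝒢) hGt_int hB
      have h2 := condExp_indicator (μ := Q) (m := 𝒢) hGs_int hB
      have h3 := condExp_congr_ae (m := 𝒢) hind
      have := h1.symm.trans (h3.trans h2)
      rw [hGs_ce] at this
      exact this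
    have heq_on : ∀ᵐ ω ∂Q, ω ∈ B → (Q[Gt|𝒢]) ω = Gs ω := by
      filter_upwards [hce_ind] with ω h1 hmem
      rwa [Set.indicator_of_mem hmem, Set.indicator_of_mem hmem] at h1
    have hQB : Q B = 0 := by
      rw [measure_eq_zero_iff_ae_notMem]
      filter_upwards [heq_on, hlt] with ω h1 h2 hmem
      exact absurd (h1 hmem) (ne_of_lt h2)
    have hnmem : ∀ᵐ ω ∂Q, ω ∉ B := measure_eq_zero_iff_ae_notMem.mp hQB
    filter_upwards [hle_c, hnmem] with ω h1 h2
    exact lt_of_le_of_ne h1 h2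
end

section
/- Suppose c_s > 0 a.s., c_s < E_Q[c_t | 𝒢] a.s., E_Q[U | 𝒢] = −y·c_s a.s., U ≥ 0 a.s., and U + y·c_t ≥ 0 a.s. Then y = 0 a.s. and U = 0 a.s. -/
open MeasureTheory

/-!
Conditioning `U ≥ 0` and `U + y·c_t ≥ 0` on `𝒢` and pulling out the `𝒢`-measurable `y` gives
`-y·c_s ≥ 0` and `y·(E[c_t | 𝒢] - c_s) ≥ 0`; since `0 < c_s < E[c_t | 𝒢]`, the first forces `y ≤ 0`
and the second `y ≥ 0`. Then `E[U | 𝒢] = 0`, so the nonnegative `U` has integral zero and vanishes.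
-/

lemma eq_zero_of_neg_mul_nonneg_of_neg_mul_add_mul_nonneg {y a b : ℝ} (ha : 0 < a) (hab : a < b)
    (h₁ : 0 ≤ -(y * a)) (h₂ : 0 ≤ -(y * a) + y * b) : y = 0 :=
  le_antisymm (by nlinarith) (by nlinarith)

section CondExp

variable {Ω : Type*} {m mΩ : MeasurableSpace Ω} {μ : Measure Ω}

lemma ae_nonneg_condExp_add_mul {f g y : Ω → ℝ} (hy : StronglyMeasurable[m] y)
    (hf : Integrable f μ) (hg : Integrable g μ) (hyg : Integrable (y * g) μ)
    (h : 0 ≤ᵐ[μ] f + y * g) : 0 ≤ᵐ[μ] μ[f | m] + y * μ[g | m] := by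
  have hsplit : μ[f + y * g | m] =ᵐ[μ] μ[f | m] + y * μ[g | m] :=
    (condExp_add hf hyg m).trans
      (Filter.EventuallyEq.rfl.add (condExp_mul_of_stronglyMeasurable_left hy hyg hg))
  filter_upwards [condExp_nonneg h, hsplit] with ω hω hωsplit
  rwa [← hωsplit]

lemma ae_eq_zero_of_nonneg_of_condExp_ae_eq_zero (hm : m ≤ mΩ) [SigmaFinite (μ.trim hm)]
    {f : Ω → ℝ} (hf_nonneg : 0 ≤ᵐ[μ] f) (hf : Integrable f μ) (hcond : μ[f | m] =ᵐ[μ] 0) :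
    f =ᵐ[μ] 0 := by
  refine (integral_eq_zero_iff_of_nonneg_ae hf_nonneg hf).mp ?_
  rw [← integral_condExp hm, integral_congr_ae hcond]
  exact integral_zero Ω ℝ

end CondExp

theorem stmt14_general {Ω : Type*} {mΩ : MeasurableSpace Ω} {Q : Measure Ω}
    [IsProbabilityMeasure Q] {𝒢 : MeasurableSpace Ω} (h𝒢 : 𝒢 ≤ mΩ)
    (cs ct y U : Ω → ℝ)
    (hy_meas : Measurable[𝒢] y)
    (hct_int : Integrable ct Q) (hU_int : Integrable U Q)
    (hyct_int : Integrable (fun ω => y ω * ct ω) Q)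
    (hcs_pos : ∀ᵐ ω ∂Q, 0 < cs ω)
    (hcs_lt : ∀ᵐ ω ∂Q, cs ω < (Q[ct | 𝒢]) ω)
    (hU_cond : Q[U | 𝒢] =ᵐ[Q] fun ω => -(y ω * cs ω))
    (hU_nonneg : ∀ᵐ ω ∂Q, 0 ≤ U ω)
    (hUy_nonneg : ∀ᵐ ω ∂Q, 0 ≤ U ω + y ω * ct ω) :
    (∀ᵐ ω ∂Q, y ω = 0) ∧ (∀ᵐ ω ∂Q, U ω = 0) := by
  have hsum : 0 ≤ᵐ[Q] Q[U | 𝒢] + y * Q[ct | 𝒢] :=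
    ae_nonneg_condExp_add_mul hy_meas.stronglyMeasurable hU_int hct_int hyct_int hUy_nonneg
  have hy0 : ∀ᵐ ω ∂Q, y ω = 0 := by
    filter_upwards [condExp_nonneg (m := 𝒢) hU_nonneg, hsum, hU_cond, hcs_pos, hcs_lt]
      with ω hcond hsumω hUω hpos hlt
    simp only [Pi.zero_apply, Pi.add_apply, Pi.mul_apply, hUω] at hcond hsumω
    exact eq_zero_of_neg_mul_nonneg_of_neg_mul_add_mul_nonneg hpos hlt hcond hsumω
  have hcond0 : Q[U | 𝒢] =ᵐ[Q] 0 :=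
    hU_cond.trans (by filter_upwards [hy0] with ω hω; simp [hω])
  exact ⟨hy0, ae_eq_zero_of_nonneg_of_condExp_ae_eq_zero h𝒢 hU_nonneg hU_int hcond0⟩

/-- Let `(Ω, Σ, Q)` be a probability space and `𝒢 ⊆ Σ` a sub-σ-algebra.
Let `cs` be a `𝒢`-measurable random variable, `ct` an integrable random variable,
`y` a `𝒢`-measurable random variable, and `U` an integrable random variable, with
`y·cs` and `y·ct` integrable. Suppose `cs > 0` a.s., `cs < E_Q[ct | 𝒢]` a.s.,
`E_Q[U | 𝒢] = −y·cs` a.s., `U ≥ 0` a.s., and `U + y·ct ≥ 0` a.s.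
Then `y = 0` a.s. and `U = 0` a.s. -/
theorem stmt14 {Ω : Type*} {mΩ : MeasurableSpace Ω} {Q : Measure Ω}
    [IsProbabilityMeasure Q] {𝒢 : MeasurableSpace Ω} (h𝒢 : 𝒢 ≤ mΩ)
    (cs ct y U : Ω → ℝ)
    (hcs_meas : Measurable[𝒢] cs) (hy_meas : Measurable[𝒢] y)
    (hct_int : Integrable ct Q) (hU_int : Integrable U Q)
    (hycs_int : Integrable (fun ω => y ω * cs ω) Q)
    (hyct_int : Integrable (fun ω => y ω * ct ω) Q)
    (hcs_pos : ∀ᵐ ω ∂Q, 0 < cs ω)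
    (hcs_lt : ∀ᵐ ω ∂Q, cs ω < (Q[ct | 𝒢]) ω)
    (hU_cond : Q[U | 𝒢] =ᵐ[Q] fun ω => -(y ω * cs ω))
    (hU_nonneg : ∀ᵐ ω ∂Q, 0 ≤ U ω)
    (hUy_nonneg : ∀ᵐ ω ∂Q, 0 ≤ U ω + y ω * ct ω) :
    (∀ᵐ ω ∂Q, y ω = 0) ∧ (∀ᵐ ω ∂Q, U ω = 0) :=
  stmt14_general h𝒢 cs ct y U hy_meas hct_int hU_int hyct_int hcs_pos hcs_lt hU_cond hU_nonneg
    hUy_nonneg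
end

section
/- Suppose that the NBDSA principle holds, and let t ∈ [0,T). If c_t is an F_t-measurable random variable such that D(t,T)·1_{{t<τ}} = c_t·1_{{t<τ}} P-a.s., then 0 < c_t < 1 P-a.s. -/
open MeasureTheory

/-!
If `c_t ≤ 0` on a non-null `F_t`-event `A`, buy `D(·,T)` on `A ∩ {t < τ}` at the price `c_t`,
financed by the bond: the payoff `1_{T<τ} - c_t e^{r(T-t)}` is nonnegative and positive on
`A ∩ {T < τ}`, which is non-null because `τ` charges every interval `(a, b]` with positive
`F_T`-conditional probability. If `c_t ≥ 1` on `A`, the reverse position pays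
`c_t e^{r(T-t)} - 1_{T<τ} ≥ 0`, positive on `A ∩ {t < τ ≤ T}`. Both are arbitrages.
A buy-and-hold position entered at `t` at zero cost is a simple self-financing strategy because
`D(·,T)` is right-continuous on `[0,T)`.
-/

open Filter Topology Set

section Enlarge

variable {Ω : Type*} {F : ℝ → MeasurableSpace Ω} {τ : Ω → ℝ}

lemma enlarge_mono_s17 {T u v : ℝ} (hF_mono : ∀ s t : ℝ, 0 ≤ s → s ≤ t → t ≤ T → F s ≤ F t)
    (hu : 0 ≤ u) (huv : u ≤ v) (hvT : v ≤ T) : enlarge F τ u ≤ enlarge F τ v :=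
  sup_le_sup (hF_mono u v hu huv hvT) <| MeasurableSpace.generateFrom_mono
    fun _ ⟨w, hw, hwu, hA⟩ => ⟨w, hw, hwu.trans huv, hA⟩

lemma measurableSet_enlarge_lt {t : ℝ} (ht : 0 ≤ t) :
    MeasurableSet[enlarge F τ t] {ω | t < τ ω} := by
  have : MeasurableSet[enlarge F τ t] {ω | τ ω ≤ t} :=
    le_sup_right (a := F t) _ (MeasurableSpace.measurableSet_generateFrom ⟨t, ht, le_rfl, rfl⟩)
  simpa only [compl_ofPred, not_le] using this.compl

end Enlarge

lemma measure_inter_ne_zero_of_condExp_indicator_pos {Ω : Type*} {m mΩ : MeasurableSpace Ω}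
    {P : Measure Ω} [IsFiniteMeasure P] (hm : m ≤ mΩ) {S : Set Ω} (hS : MeasurableSet S)
    (hpos : ∀ᵐ ω ∂P, 0 < P[S.indicator (fun _ => (1 : ℝ)) | m] ω)
    {A : Set Ω} (hA : MeasurableSet[m] A) (hPA : P A ≠ 0) : P (A ∩ S) ≠ 0 := by
  intro hAS
  have hint : ∫ ω in A, P[S.indicator (fun _ => (1 : ℝ)) | m] ω ∂P = 0 := by
    rw [setIntegral_condExp hm ((integrable_const 1).indicator hS) hA,
      setIntegral_indicator hS, setIntegral_const, measureReal_def, hAS]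
    simp
  have hzero := (setIntegral_eq_zero_iff_of_nonneg_ae
    (ae_restrict_of_ae (hpos.mono fun _ h => h.le)) integrable_condExp.integrableOn).1 hint
  have : ∀ᵐ ω ∂P.restrict A, False := by
    filter_upwards [ae_restrict_of_ae hpos, hzero] with ω h₁ h₂
    exact h₁.ne' h₂
  exact hPA (by simpa using this)

lemma continuousWithinAt_Ioi_of_continuousOn_Iio_tau {Ω : Type*} {T : ℝ} {D : ℝ → Ω → ℝ}
    {τ : Ω → ℝ}
    (hD_cont : ∀ ω, ContinuousOn (fun t => D t ω) (Icc 0 T ∩ Iio (τ ω)))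
    (hD_rc : ∀ ω, ∀ t ∈ Icc (0 : ℝ) T, τ ω ≤ t →
      ContinuousWithinAt (fun t => D t ω) (Ici t) t)
    {p : ℝ} (hp : p ∈ Ico 0 T) (ω : Ω) : ContinuousWithinAt (fun t => D t ω) (Ioi p) p := by
  rcases le_or_gt (τ ω) p with hτ | hτ
  · exact (hD_rc ω p (Ico_subset_Icc_self hp) hτ).mono Ioi_subset_Ici_self
  · refine ((hD_cont ω) p ⟨Ico_subset_Icc_self hp, hτ⟩).mono_of_mem_nhdsWithin ?_
    filter_upwards [Ioo_mem_nhdsGT (lt_min hp.2 hτ)] with u hu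
    exact ⟨⟨hp.1.trans hu.1.le, (hu.2.trans_le (min_le_left _ _)).le⟩,
      hu.2.trans_le (min_le_right _ _)⟩

section BuyAndHold

variable {Ω : Type*} {r T t : ℝ} {D : ℝ → Ω → ℝ} {x y : Ω → ℝ}

noncomputable def buyAndHold (t T : ℝ) (x : Ω → ℝ) : ℝ → Ω → ℝ :=
  (Ioc t T).indicator fun _ => x

lemma buyAndHold_congr {u v : ℝ} (h : u ∈ Ioc t T ↔ v ∈ Ioc t T) :
    buyAndHold t T x u = buyAndHold t T x v := by
  simp only [buyAndHold, indicator_apply, h]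

lemma BDvalue_buyAndHold_of_mem {u : ℝ} (hu : u ∈ Ioc t T) (ω : Ω) :
    BDvalue r T D (buyAndHold t T x) (buyAndHold t T y) u ω =
      x ω * Real.exp (-(r * (T - u))) + y ω * D u ω := by
  simp [BDvalue, buyAndHold, hu]

lemma BDvalue_buyAndHold_of_notMem {u : ℝ} (hu : u ∉ Ioc t T) (ω : Ω) :
    BDvalue r T D (buyAndHold t T x) (buyAndHold t T y) u ω = 0 := by
  simp [BDvalue, buyAndHold, hu]

lemma measurable_buyAndHold {F : ℝ → MeasurableSpace Ω} {τ : Ω → ℝ}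
    (hF_mono : ∀ s t : ℝ, 0 ≤ s → s ≤ t → t ≤ T → F s ≤ F t) (ht : 0 ≤ t)
    (hx : Measurable[enlarge F τ t] x) {u v : ℝ} (hv : u ∈ Ioc t T → v ∈ Icc t T) :
    Measurable[enlarge F τ v] (buyAndHold t T x u) := by
  by_cases hu : u ∈ Ioc t T
  · simp only [buyAndHold, indicator_of_mem hu]
    exact hx.mono (enlarge_mono_s17 hF_mono ht (hv hu).1 (hv hu).2) le_rfl
  · simp only [buyAndHold, indicator_of_notMem hu]
    exact measurable_const

variable [MeasurableSpace Ω] {P : Measure Ω}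

/-- At the entry date `t`, right-continuity is exactly the condition that the position costs
nothing. -/
lemma tendsto_BDvalue_buyAndHold {p : ℝ} (hpT : p < T)
    (hD : ∀ ω, ContinuousWithinAt (fun u => D u ω) (Ioi p) p)
    (h0 : ∀ᵐ ω ∂P, x ω * Real.exp (-(r * (T - t))) + y ω * D t ω = 0) :
    ∀ᵐ ω ∂P, Tendsto (fun u => BDvalue r T D (buyAndHold t T x) (buyAndHold t T y) u ω)
      (𝓝[>] p) (𝓝 (BDvalue r T D (buyAndHold t T x) (buyAndHold t T y) p ω)) := by
  rcases lt_or_ge p t with hpt | htp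
  · refine ae_of_all _ fun ω => ?_
    rw [BDvalue_buyAndHold_of_notMem (fun h => hpt.not_gt h.1)]
    refine tendsto_const_nhds.congr' ?_
    filter_upwards [Ioo_mem_nhdsGT hpt] with u hu
    rw [BDvalue_buyAndHold_of_notMem (fun h => hu.2.not_gt h.1)]
  · filter_upwards [h0] with ω hω
    have hp : BDvalue r T D (buyAndHold t T x) (buyAndHold t T y) p ω =
        x ω * Real.exp (-(r * (T - p))) + y ω * D p ω := by
      rcases htp.lt_or_eq with htp | rfl
      · exact BDvalue_buyAndHold_of_mem ⟨htp, hpT.le⟩ ω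
      · rw [BDvalue_buyAndHold_of_notMem (fun h => lt_irrefl _ h.1), hω]
    have hB : Continuous fun u : ℝ => Real.exp (-(r * (T - u))) := by fun_prop
    rw [hp]
    refine ((hB.continuousWithinAt.tendsto.const_mul (x ω)).add
      ((hD ω).tendsto.const_mul (y ω))).congr' ?_
    filter_upwards [Ioc_mem_nhdsGT hpT] with u hu
    exact (BDvalue_buyAndHold_of_mem ⟨htp.trans_lt hu.1, hu.2⟩ ω).symm

variable {F : ℝ → MeasurableSpace Ω} {τ : Ω → ℝ}

lemma isBDSimpleSelfFinancing_buyAndHold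
    (hF_mono : ∀ s t : ℝ, 0 ≤ s → s ≤ t → t ≤ T → F s ≤ F t)
    (hD : ∀ p ∈ Ico 0 T, ∀ ω, ContinuousWithinAt (fun u => D u ω) (Ioi p) p)
    (ht : t ∈ Ico 0 T) (hx : Measurable[enlarge F τ t] x) (hy : Measurable[enlarge F τ t] y)
    (h0 : ∀ᵐ ω ∂P, x ω * Real.exp (-(r * (T - t))) + y ω * D t ω = 0) :
    IsBDSimpleSelfFinancing P F τ D r T (buyAndHold t T x) (buyAndHold t T y) := by
  -- the entry date `t` must be a trading date unless it is `0`
  obtain ⟨m, hm, htm, ht0m⟩ : ∃ m ∈ Ioo 0 T, t ≤ m ∧ (t = 0 ∨ t = m) := by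
    rcases ht.1.eq_or_lt with rfl | ht0
    · exact ⟨T / 2, ⟨by linarith [ht.2], by linarith [ht.2]⟩, by linarith [ht.2], Or.inl rfl⟩
    · exact ⟨t, ⟨ht0, ht.2⟩, le_rfl, Or.inr rfl⟩
  set s : ℕ → ℝ := fun n => if n = 0 then 0 else if n = 1 then m else T with hs
  have hmeas {z : Ω → ℝ} (hz : Measurable[enlarge F τ t] z) {u v : ℝ}
      (hv : u ∈ Ioc t T → v ∈ Icc t T) : Measurable[enlarge F τ v] (buyAndHold t T z u) :=
    measurable_buyAndHold hF_mono ht.1 hz hv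
  have hm_entry : m ∈ Ioc t T → (0 : ℝ) ∈ Icc t T := fun h => by
    rcases ht0m with rfl | rfl
    exacts [⟨le_rfl, ht.2.le⟩, absurd h.1 (lt_irrefl _)]
  refine ⟨fun u hu => ⟨hmeas hx fun h => ⟨h.1.le, hu.2⟩, hmeas hy fun h => ⟨h.1.le, hu.2⟩⟩,
    2, s, fun n => buyAndHold t T x (s n), fun n => buyAndHold t T y (s n),
    two_pos, rfl, rfl, ?_, ?_, ?_, ?_⟩
  · intro n hn
    interval_cases n <;> simp [hs, hm.1, hm.2]
  · intro n h1 h2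
    interval_cases n
    · exact ⟨hmeas hx hm_entry, hmeas hy hm_entry⟩
    · exact ⟨hmeas hx fun _ => ⟨htm, hm.2.le⟩, hmeas hy fun _ => ⟨htm, hm.2.le⟩⟩
  · intro n h1 h2 u hu
    have hiff : u ∈ Ioc t T ↔ s n ∈ Ioc t T := by
      interval_cases n
      · simp only [hs] at hu ⊢
        rcases ht0m with rfl | rfl
        · exact iff_of_true ⟨hu.1, hu.2.trans hm.2.le⟩ ⟨hm.1, hm.2.le⟩
        · exact iff_of_false (fun h => h.1.not_ge hu.2) (fun h => lt_irrefl _ h.1)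
      · simp only [hs] at hu ⊢
        exact iff_of_true ⟨htm.trans_lt hu.1, hu.2⟩ ⟨htm.trans_lt hm.2, le_rfl⟩
    exact ⟨buyAndHold_congr hiff, buyAndHold_congr hiff⟩
  · intro n hn
    have hsn : s n ∈ Ico 0 T := by
      interval_cases n
      exacts [⟨le_rfl, hm.1.trans hm.2⟩, ⟨hm.1.le, hm.2⟩]
    exact tendsto_BDvalue_buyAndHold hsn.2 (hD _ hsn) h0

lemma NBDSA.measure_buyAndHold_payoff_pos_eq_zero (hNBDSA : NBDSA P F τ D r T)
    (hF_mono : ∀ s t : ℝ, 0 ≤ s → s ≤ t → t ≤ T → F s ≤ F t)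
    (hD : ∀ p ∈ Ico 0 T, ∀ ω, ContinuousWithinAt (fun u => D u ω) (Ioi p) p)
    (ht : t ∈ Ico 0 T) (hx : Measurable[enlarge F τ t] x) (hy : Measurable[enlarge F τ t] y)
    (h0 : ∀ᵐ ω ∂P, x ω * Real.exp (-(r * (T - t))) + y ω * D t ω = 0)
    (hpay : ∀ᵐ ω ∂P, 0 ≤ x ω + y ω * D T ω) : P {ω | 0 < x ω + y ω * D T ω} = 0 := by
  have hVT (ω : Ω) : BDvalue r T D (buyAndHold t T x) (buyAndHold t T y) T ω =
      x ω + y ω * D T ω := by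
    simp [BDvalue_buyAndHold_of_mem ⟨ht.2, le_rfl⟩]
  by_contra h
  refine hNBDSA ⟨_, _, isBDSimpleSelfFinancing_buyAndHold hF_mono hD ht hx hy h0,
    ae_of_all _ (BDvalue_buyAndHold_of_notMem fun h => ht.1.not_gt h.1), ?_, ?_⟩
  · simpa only [hVT] using hpay
  · simpa only [hVT] using pos_iff_ne_zero.2 h

/-- The strategy holds `σ` units of `D(·,T)` on `A ∩ {t < τ}`, financed by `σ c_t / B(t,T)`
units of the bond; it costs nothing at `t` because `D(t,T) = c_t` there. -/
lemma NBDSA.measure_hedge_payoff_pos_eq_zero (hNBDSA : NBDSA P F τ D r T)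
    (hF_mono : ∀ s t : ℝ, 0 ≤ s → s ≤ t → t ≤ T → F s ≤ F t)
    (hD : ∀ p ∈ Ico 0 T, ∀ ω, ContinuousWithinAt (fun u => D u ω) (Ioi p) p)
    (ht : t ∈ Ico 0 T) {c : Ω → ℝ} (hc : Measurable[F t] c)
    (hDc : ∀ᵐ ω ∂P, D t ω * {ω' | t < τ ω'}.indicator (fun _ => (1 : ℝ)) ω =
      c ω * {ω' | t < τ ω'}.indicator (fun _ => (1 : ℝ)) ω)
    (σ : ℝ) {A : Set Ω} (hA : MeasurableSet[F t] A)
    (hpay : ∀ ω ∈ A, t < τ ω → 0 ≤ σ * (D T ω - c ω * Real.exp (r * (T - t)))) :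
    P (A ∩ {ω | t < τ ω} ∩ {ω | 0 < σ * (D T ω - c ω * Real.exp (r * (T - t)))}) = 0 := by
  set E := Real.exp (r * (T - t))
  set C := A ∩ {ω | t < τ ω}
  have hC : MeasurableSet[enlarge F τ t] C :=
    (le_sup_left (b := MeasurableSpace.generateFrom _) _ hA).inter
      (measurableSet_enlarge_lt ht.1)
  have hc' : Measurable[enlarge F τ t] c := hc.mono le_sup_left le_rfl
  have hE : E * Real.exp (-(r * (T - t))) = 1 := by rw [← Real.exp_add]; simp
  have hpayoff (ω : Ω) : C.indicator (fun ω => -(σ * c ω * E)) ω +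
      C.indicator (fun _ => σ) ω * D T ω = C.indicator (fun ω => σ * (D T ω - c ω * E)) ω := by
    by_cases hω : ω ∈ C
    · simp only [indicator_of_mem hω]; ring
    · simp [hω]
  have hnull := hNBDSA.measure_buyAndHold_payoff_pos_eq_zero
    (x := C.indicator fun ω => -(σ * c ω * E)) (y := C.indicator fun _ => σ) hF_mono hD ht
    ((((hc'.const_mul σ).mul_const E).neg).indicator hC) (measurable_const.indicator hC) ?_ ?_
  · refine measure_mono_null (fun ω ⟨hωC, hω⟩ => ?_) hnull
    simpa [hpayoff, indicator_of_mem hωC] using hω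
  · filter_upwards [hDc] with ω hω
    by_cases hωC : ω ∈ C
    · have hDt : D t ω = c ω := by simpa [indicator_of_mem hωC.2] using hω
      simp only [indicator_of_mem hωC, hDt]
      linear_combination (-σ * c ω) * hE
    · simp [hωC]
  · refine ae_of_all _ fun ω => ?_
    rw [hpayoff]
    by_cases hω : ω ∈ C
    · rw [indicator_of_mem hω]; exact hpay ω hω.1 hω.2
    · rw [indicator_of_notMem hω]

lemma NBDSA.measure_eq_zero_of_hedge_payoff_nonneg [IsFiniteMeasure P]
    (hNBDSA : NBDSA P F τ D r T) (hF_mono : ∀ s t : ℝ, 0 ≤ s → s ≤ t → t ≤ T → F s ≤ F t)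
    (hF_le : F T ≤ ‹MeasurableSpace Ω›)
    (hτ_meas : Measurable τ)
    (hτ_cond : ∀ s t : ℝ, 0 ≤ s → s < t →
      ∀ᵐ ω ∂P, 0 < (P[Set.indicator {ω | s < τ ω ∧ τ ω ≤ t} (fun _ => (1 : ℝ)) | F T]) ω)
    (hD : ∀ p ∈ Ico 0 T, ∀ ω, ContinuousWithinAt (fun u => D u ω) (Ioi p) p)
    (ht : t ∈ Ico 0 T) {c : Ω → ℝ} (hc : Measurable[F t] c)
    (hDc : ∀ᵐ ω ∂P, D t ω * {ω' | t < τ ω'}.indicator (fun _ => (1 : ℝ)) ω =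
      c ω * {ω' | t < τ ω'}.indicator (fun _ => (1 : ℝ)) ω)
    (σ : ℝ) {A : Set Ω} (hA : MeasurableSet[F t] A) {a b : ℝ} (hta : t ≤ a) (hab : a < b)
    (hpay : ∀ ω ∈ A, t < τ ω → 0 ≤ σ * (D T ω - c ω * Real.exp (r * (T - t))))
    (hpos : ∀ ω ∈ A, a < τ ω → τ ω ≤ b → 0 < σ * (D T ω - c ω * Real.exp (r * (T - t)))) :
    P A = 0 := by
  by_contra hPA
  refine measure_inter_ne_zero_of_condExp_indicator_pos hF_le (hτ_meas measurableSet_Ioc)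
    (hτ_cond a b (ht.1.trans hta) hab) (hF_mono t T ht.1 ht.2.le le_rfl _ hA) hPA
    (measure_mono_null ?_
      (hNBDSA.measure_hedge_payoff_pos_eq_zero hF_mono hD ht hc hDc σ hA hpay))
  rintro ω ⟨hωA, hωa, hωb⟩
  exact ⟨⟨hωA, hta.trans_lt hωa⟩, hpos ω hωA hωa hωb⟩

end BuyAndHold

theorem stmt17_general {Ω : Type*} [mΩ : MeasurableSpace Ω] (P : Measure Ω)
    [IsProbabilityMeasure P] (T r : ℝ) (hr : 0 ≤ r)
    (F : ℝ → MeasurableSpace Ω)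
    (hF_mono : ∀ s t : ℝ, 0 ≤ s → s ≤ t → t ≤ T → F s ≤ F t)
    (hF_le : ∀ t ∈ Set.Icc (0 : ℝ) T, F t ≤ mΩ)
    (τ : Ω → ℝ) (hτ_meas : Measurable τ)
    (hτ_cond : ∀ s t : ℝ, 0 ≤ s → s < t →
      ∀ᵐ ω ∂P, 0 < (P[Set.indicator {ω | s < τ ω ∧ τ ω ≤ t}
        (fun _ => (1 : ℝ)) | F T]) ω)
    (D : ℝ → Ω → ℝ)
    (hD_T : ∀ ω, D T ω = Set.indicator {ω' | T < τ ω'} (fun _ => (1 : ℝ)) ω)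
    (hD_cont : ∀ ω, ContinuousOn (fun t => D t ω) (Set.Icc 0 T ∩ Set.Iio (τ ω)))
    (hD_rc : ∀ ω, ∀ t ∈ Set.Icc (0 : ℝ) T, τ ω ≤ t →
      ContinuousWithinAt (fun t => D t ω) (Set.Ici t) t)
    (hNBDSA : NBDSA P F τ D r T)
    (t : ℝ) (ht : t ∈ Set.Ico (0 : ℝ) T)
    (ct : Ω → ℝ) (hct_meas : Measurable[F t] ct)
    (hct : ∀ᵐ ω ∂P, D t ω * Set.indicator {ω' | t < τ ω'} (fun _ => (1 : ℝ)) ω =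
      ct ω * Set.indicator {ω' | t < τ ω'} (fun _ => (1 : ℝ)) ω) :
    ∀ᵐ ω ∂P, ct ω ∈ Set.Ioo (0 : ℝ) 1 := by
  have hD (p : ℝ) (hp : p ∈ Ico 0 T) :=
    continuousWithinAt_Ioi_of_continuousOn_Iio_tau hD_cont hD_rc hp
  have hnull := hNBDSA.measure_eq_zero_of_hedge_payoff_nonneg hF_mono
    (hF_le T ⟨ht.1.trans ht.2.le, le_rfl⟩) hτ_meas hτ_cond hD ht hct_meas hct
  have hE : 1 ≤ Real.exp (r * (T - t)) := Real.one_le_exp (mul_nonneg hr (by linarith [ht.2]))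
  have hDT (ω : Ω) : D T ω = if T < τ ω then 1 else 0 := by simp [hD_T, indicator_apply]
  -- long the hedge where `c_t ≤ 0`, profitable if `τ > T`
  have h₀ : P {ω | ct ω ≤ 0} = 0 := by
    refine hnull 1 (hct_meas measurableSet_Iic) ht.2.le (lt_add_one T) ?_ ?_
    · intro ω (hω : ct ω ≤ 0) _
      rw [hDT]; split_ifs <;> nlinarith
    · intro ω (hω : ct ω ≤ 0) hTτ _
      rw [hDT, if_pos hTτ]; nlinarith
  -- short the hedge where `c_t ≥ 1`, profitable if `t < τ ≤ T`
  have h₁ : P {ω | 1 ≤ ct ω} = 0 := by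
    refine hnull (-1) (hct_meas measurableSet_Ici) le_rfl ht.2 ?_ ?_
    · intro ω (hω : 1 ≤ ct ω) _
      rw [hDT]; split_ifs <;> nlinarith
    · intro ω (hω : 1 ≤ ct ω) _ hτT
      rw [hDT, if_neg hτT.not_gt]; nlinarith
  filter_upwards [measure_eq_zero_iff_ae_notMem.1 h₀, measure_eq_zero_iff_ae_notMem.1 h₁]
    with ω h₀ h₁
  exact ⟨not_le.1 h₀, not_le.1 h₁⟩

/-- Suppose that the NBDSA principle holds, and let `t ∈ [0,T)`.  If `c_t`
is an `F_t`-measurable random variable such that `D(t,T)·1_{{t<τ}} = c_t·1_{{t<τ}}`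
`P`-a.s., then `0 < c_t < 1` `P`-a.s. -/
theorem stmt17 {Ω : Type*} [mΩ : MeasurableSpace Ω] (P : Measure Ω)
    [IsProbabilityMeasure P] (T r : ℝ) (hT : 0 < T) (hr : 0 ≤ r)
    (F : ℝ → MeasurableSpace Ω)
    (hF_mono : ∀ s t : ℝ, 0 ≤ s → s ≤ t → t ≤ T → F s ≤ F t)
    (hF_le : ∀ t ∈ Set.Icc (0 : ℝ) T, F t ≤ mΩ)
    (τ : Ω → ℝ) (hτ_pos : ∀ ω, 0 < τ ω) (hτ_meas : Measurable τ)
    (hτ_cond : ∀ s t : ℝ, 0 ≤ s → s < t →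
      ∀ᵐ ω ∂P, 0 < (P[Set.indicator {ω | s < τ ω ∧ τ ω ≤ t}
        (fun _ => (1 : ℝ)) | F T]) ω)
    (D : ℝ → Ω → ℝ)
    (hD_adapted : ∀ t ∈ Set.Icc (0 : ℝ) T, Measurable[enlarge F τ t] (D t))
    (hD_T : ∀ ω, D T ω = Set.indicator {ω' | T < τ ω'} (fun _ => (1 : ℝ)) ω)
    (hD_cont : ∀ ω, ContinuousOn (fun t => D t ω) (Set.Icc 0 T ∩ Set.Iio (τ ω)))
    (hD_rc : ∀ ω, ∀ t ∈ Set.Icc (0 : ℝ) T, τ ω ≤ t →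
      ContinuousWithinAt (fun t => D t ω) (Set.Ici t) t)
    (hNBDSA : NBDSA P F τ D r T)
    (t : ℝ) (ht : t ∈ Set.Ico (0 : ℝ) T)
    (ct : Ω → ℝ) (hct_meas : Measurable[F t] ct)
    (hct : ∀ᵐ ω ∂P, D t ω * Set.indicator {ω' | t < τ ω'} (fun _ => (1 : ℝ)) ω =
      ct ω * Set.indicator {ω' | t < τ ω'} (fun _ => (1 : ℝ)) ω) :
    ∀ᵐ ω ∂P, ct ω ∈ Set.Ioo (0 : ℝ) 1 :=
  stmt17_general (mΩ := mΩ) P T r hr F hF_mono hF_le τ hτ_meas hτ_cond D hD_T hD_cont hD_rc hNBDSA t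
    ht ct hct_meas hct
end
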